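/- arXiv:2206.13352 — 8 statements merged into one kernel-verified Lean document; each statement's English description precedes it below -/
import Mathlib

section
/- If (φ*, q*, μ*) is a saddle point of L, then the 7-tuple (φ*, q*, Bφ*, q*, μ*, μ*, μ*) is a saddle point of L'. -/
open RealInnerProductSpace

/-- If (φ*, q*, μ*) is a saddle point of L, then the 7-tuple
(φ*, q*, Bφ*, q*, μ*, μ*, μ*) is a saddle point of L'. -/
theorem saddle_L_implies_saddle_L'
    {V H : Type*} [NormedAddCommGroup V] [InnerProductSpace ℝ V] [CompleteSpace V]
    [NormedAddCommGroup H] [InnerProductSpace ℝ H] [CompleteSpace H]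
    (B : V →L[ℝ] H) (F : H → ℝ) (G : V → ℝ) (I : H → ℝ)
    (hFconv : ConvexOn ℝ Set.univ F) (hFlsc : LowerSemicontinuous F)
    (hGconv : ConvexOn ℝ Set.univ G) (hGlsc : LowerSemicontinuous G)
    (hIconv : ConvexOn ℝ Set.univ I) (hIlsc : LowerSemicontinuous I)
    (L : V → H → H → ℝ)
    (hL : ∀ (φ : V) (q μ : H), L φ q μ = F q + G φ - I μ + ⟪μ, B φ - q⟫)
    (L' : V → H → H → H → H → H → H → ℝ)
    (hL' : ∀ (φ : V) (q p b μ ν η : H), L' φ q p b μ ν η =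
      F q + G φ - I μ + ⟪μ, p - b⟫ + ⟪ν, B φ - p⟫ + ⟪η, b - q⟫)
    (φs : V) (qs μs : H)
    (hsaddle : ∀ (φ : V) (q μ : H), L φs qs μ ≤ L φs qs μs ∧ L φs qs μs ≤ L φ q μs) :
    ∀ (φ : V) (q p b μ ν η : H),
      L' φs qs (B φs) qs μ ν η ≤ L' φs qs (B φs) qs μs μs μs ∧
      L' φs qs (B φs) qs μs μs μs ≤ L' φ q p b μs μs μs := by
  intro φ q p b μ ν η
  have h1 := (hsaddle φ q μ).1
  have h2 := (hsaddle φ q μ).2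
  simp only [hL, hL'] at h1 h2 ⊢
  constructor
  · simpa [inner_sub_right] using h1
  · have : ⟪μs, p - b⟫ + ⟪μs, B φ - p⟫ + ⟪μs, b - q⟫ = ⟪μs, B φ - q⟫ := by
      simp only [inner_sub_right]; ring
    simp only [sub_self, inner_zero_right]
    linarith [this, h2]
end

section
/- If (φ*, q*, p*, b*, μ*, ν*, η*) is a saddle point of L', then p* = Bφ*, b* = q*, μ* = ν* = η*, and (φ*, q*, μ*) is a saddle point of L. -/
open RealInnerProductSpace

/-- If (φ*, q*, p*, b*, μ*, ν*, η*) is a saddle point of L', then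
p* = Bφ*, b* = q*, μ* = ν* = η*, and (φ*, q*, μ*) is a saddle point of L. -/
theorem saddle_L'_implies_saddle_L
    {V H : Type*} [NormedAddCommGroup V] [InnerProductSpace ℝ V] [CompleteSpace V]
    [NormedAddCommGroup H] [InnerProductSpace ℝ H] [CompleteSpace H]
    (B : V →L[ℝ] H) (F : H → ℝ) (G : V → ℝ) (I : H → ℝ)
    (hFconv : ConvexOn ℝ Set.univ F) (hFlsc : LowerSemicontinuous F)
    (hGconv : ConvexOn ℝ Set.univ G) (hGlsc : LowerSemicontinuous G)
    (hIconv : ConvexOn ℝ Set.univ I) (hIlsc : LowerSemicontinuous I)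
    (L : V → H → H → ℝ)
    (hL : ∀ (φ : V) (q μ : H), L φ q μ = F q + G φ - I μ + ⟪μ, B φ - q⟫)
    (L' : V → H → H → H → H → H → H → ℝ)
    (hL' : ∀ (φ : V) (q p b μ ν η : H), L' φ q p b μ ν η =
      F q + G φ - I μ + ⟪μ, p - b⟫ + ⟪ν, B φ - p⟫ + ⟪η, b - q⟫)
    (φs : V) (qs ps bs μs νs ηs : H)
    (hsaddle : ∀ (φ : V) (q p b μ ν η : H),
      L' φs qs ps bs μ ν η ≤ L' φs qs ps bs μs νs ηs ∧
      L' φs qs ps bs μs νs ηs ≤ L' φ q p b μs νs ηs) :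
    ps = B φs ∧ bs = qs ∧ μs = νs ∧ νs = ηs ∧
    ∀ (φ : V) (q μ : H), L φs qs μ ≤ L φs qs μs ∧ L φs qs μs ≤ L φ q μs := by
  -- p* = Bφ*
  have hp : ps = B φs := by
    have h := (hsaddle φs qs ps bs μs (νs + (B φs - ps)) ηs).1
    rw [hL', hL', inner_add_left] at h
    have : ⟪B φs - ps, B φs - ps⟫ ≤ 0 := by linarith
    have h0 : B φs - ps = 0 := by
      have := real_inner_self_nonneg (x := B φs - ps)
      exact inner_self_eq_zero.mp (le_antisymm ‹_› this)
    have := sub_eq_zero.mp h0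
    exact this.symm
  -- b* = q*
  have hb : bs = qs := by
    have h := (hsaddle φs qs ps bs μs νs (ηs + (bs - qs))).1
    rw [hL', hL', inner_add_left] at h
    have : ⟪bs - qs, bs - qs⟫ ≤ 0 := by linarith
    have h0 : bs - qs = 0 := by
      have := real_inner_self_nonneg (x := bs - qs)
      exact inner_self_eq_zero.mp (le_antisymm ‹_› this)
    exact sub_eq_zero.mp h0
  -- μ* = ν*
  have hmn : μs = νs := by
    have h := (hsaddle φs qs (ps + (νs - μs)) bs μs νs ηs).2
    rw [hL', hL'] at h
    rw [show ps + (νs - μs) - bs = (ps - bs) + (νs - μs) by abel] at h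
    rw [show B φs - (ps + (νs - μs)) = (B φs - ps) + -(νs - μs) by abel] at h
    rw [inner_add_right, inner_add_right, inner_neg_right] at h
    have : ⟪νs - μs, νs - μs⟫ ≤ 0 := by
      have := real_inner_comm μs (νs - μs)
      have := real_inner_comm νs (νs - μs)
      rw [inner_sub_left (𝕜 := ℝ) νs μs (νs - μs)] at *
      linarith
    have h0 : νs - μs = 0 := by
      have := real_inner_self_nonneg (x := νs - μs)
      exact inner_self_eq_zero.mp (le_antisymm ‹_› this)
    exact (sub_eq_zero.mp h0).symm
  -- μ* = η*
  have hmh : μs = ηs := by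
    have h := (hsaddle φs qs ps (bs + (μs - ηs)) μs νs ηs).2
    rw [hL', hL'] at h
    rw [show ps - (bs + (μs - ηs)) = (ps - bs) + -(μs - ηs) by abel] at h
    rw [show bs + (μs - ηs) - qs = (bs - qs) + (μs - ηs) by abel] at h
    rw [inner_add_right, inner_add_right, inner_neg_right] at h
    have : ⟪μs - ηs, μs - ηs⟫ ≤ 0 := by
      have := real_inner_comm μs (μs - ηs)
      have := real_inner_comm ηs (μs - ηs)
      rw [inner_sub_left (𝕜 := ℝ) μs ηs (μs - ηs)] at *
      linarith
    have h0 : μs - ηs = 0 := by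
      have := real_inner_self_nonneg (x := μs - ηs)
      exact inner_self_eq_zero.mp (le_antisymm ‹_› this)
    exact sub_eq_zero.mp h0
  refine ⟨hp, hb, hmn, hmn ▸ hmh ▸ rfl, fun φ q μ => ⟨?_, ?_⟩⟩
  · have h := (hsaddle φs qs ps bs μ νs ηs).1
    rw [hL', hL', hp, hb] at h
    rw [hL, hL]
    simp only [sub_self, inner_zero_right, add_zero] at h
    exact h
  · have h := (hsaddle φ q (B φ) q μs νs ηs).2
    rw [hL', hL', hp, hb] at h
    rw [hL, hL]
    simp only [sub_self, inner_zero_right, add_zero] at h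
    exact h
end

section
/- Let r > 0 and s > 0. If (φ*, q*, p*, b*, μ*, ν*, η*) is a saddle point of the augmented Lagrangian L_{r,s}, then Bφ* = p*, b* = q*, μ* = ν* = η*, and (φ*, q*, p*, b*, μ*, ν*, η*) is a saddle point of L'. -/
open RealInnerProductSpace

lemma eq_zero_of_inner_le_sq {H : Type*} [NormedAddCommGroup H] [InnerProductSpace ℝ H]
    (c : H) (t : ℝ) (ht : 0 < t) (h : ∀ d : H, ⟪c, d⟫ ≤ (t/2) * ‖d‖^2) : c = 0 := by
  have h1 := h ((1/t) • c)
  rw [real_inner_smul_right, norm_smul, real_inner_self_eq_norm_sq] at h1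
  have h2 : ‖c‖^2 ≤ 0 := by
    have ht' : t ≠ 0 := ht.ne'
    have : ((1:ℝ)/t) * ‖c‖^2 ≤ t/2 * ((1/t)^2 * ‖c‖^2) := by
      simpa [mul_pow, abs_of_pos (by positivity : (0:ℝ) < 1/t)] using h1
    have e1 : (2*t) * (1/t * ‖c‖^2) = 2*‖c‖^2 := by field_simp
    have e2 : (2*t) * (t/2 * ((1/t)^2 * ‖c‖^2)) = ‖c‖^2 := by field_simp
    have h4 := mul_le_mul_of_nonneg_left this (by positivity : (0:ℝ) ≤ 2*t)
    rw [e1, e2] at h4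
    linarith
  have : ‖c‖ = 0 := by nlinarith [norm_nonneg c]
  simpa using this


/-- Let r > 0 and s > 0. If (φ*, q*, p*, b*, μ*, ν*, η*) is a saddle
point of the augmented Lagrangian L_{r,s}, then Bφ* = p*, b* = q*, μ* = ν* = η*,
and (φ*, q*, p*, b*, μ*, ν*, η*) is a saddle point of L'. -/
theorem saddle_Lrs_implies_saddle_L'
    {V H : Type*} [NormedAddCommGroup V] [InnerProductSpace ℝ V] [CompleteSpace V]
    [NormedAddCommGroup H] [InnerProductSpace ℝ H] [CompleteSpace H]
    (B : V →L[ℝ] H) (F : H → ℝ) (G : V → ℝ) (I : H → ℝ)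
    (hFconv : ConvexOn ℝ Set.univ F) (hFlsc : LowerSemicontinuous F)
    (hGconv : ConvexOn ℝ Set.univ G) (hGlsc : LowerSemicontinuous G)
    (hIconv : ConvexOn ℝ Set.univ I) (hIlsc : LowerSemicontinuous I)
    (L' : V → H → H → H → H → H → H → ℝ)
    (hL' : ∀ (φ : V) (q p b μ ν η : H), L' φ q p b μ ν η =
      F q + G φ - I μ + ⟪μ, p - b⟫ + ⟪ν, B φ - p⟫ + ⟪η, b - q⟫)
    (r s : ℝ) (hr : 0 < r) (hs : 0 < s)
    (Lrs : V → H → H → H → H → H → H → ℝ)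
    (hLrs : ∀ (φ : V) (q p b μ ν η : H), Lrs φ q p b μ ν η =
      L' φ q p b μ ν η + (r/2) * ‖B φ - p‖^2 + (r/2) * ‖b - q‖^2
        - (s/2) * ‖μ - ν‖^2 - (s/2) * ‖μ - η‖^2)
    (φs : V) (qs ps bs μs νs ηs : H)
    (hsaddle : ∀ (φ : V) (q p b μ ν η : H),
      Lrs φs qs ps bs μ ν η ≤ Lrs φs qs ps bs μs νs ηs ∧
      Lrs φs qs ps bs μs νs ηs ≤ Lrs φ q p b μs νs ηs) :
    B φs = ps ∧ bs = qs ∧ μs = νs ∧ νs = ηs ∧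
    ∀ (φ : V) (q p b μ ν η : H),
      L' φs qs ps bs μ ν η ≤ L' φs qs ps bs μs νs ηs ∧
      L' φs qs ps bs μs νs ηs ≤ L' φ q p b μs νs ηs := by
  have hmax : ∀ μ ν η, Lrs φs qs ps bs μ ν η ≤ Lrs φs qs ps bs μs νs ηs :=
    fun μ ν η => (hsaddle φs qs ps bs μ ν η).1
  have hmin : ∀ φ q p b, Lrs φs qs ps bs μs νs ηs ≤ Lrs φ q p b μs νs ηs :=
    fun φ q p b => (hsaddle φ q p b μs νs ηs).2
  -- perturbation in p
  have hp : r • (B φs - ps) - (μs - νs) = 0 := by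
    apply eq_zero_of_inner_le_sq _ r hr
    intro d
    have h := hmin φs qs (ps + d) bs
    simp only [hLrs, hL', ← real_inner_self_eq_norm_sq, inner_sub_left, inner_sub_right,
      inner_add_left, inner_add_right, real_inner_smul_left] at h ⊢
    simp only [real_inner_comm d] at h ⊢
    linarith
  -- perturbation in b
  have hb : (μs - ηs) - r • (bs - qs) = 0 := by
    apply eq_zero_of_inner_le_sq _ r hr
    intro d
    have h := hmin φs qs ps (bs + d)
    simp only [hLrs, hL', ← real_inner_self_eq_norm_sq, inner_sub_left, inner_sub_right,
      inner_add_left, inner_add_right, real_inner_smul_left] at h ⊢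
    simp only [real_inner_comm d] at h ⊢
    linarith
  -- perturbation in ν
  have hν : (B φs - ps) + s • (μs - νs) = 0 := by
    apply eq_zero_of_inner_le_sq _ s hs
    intro d
    have h := hmax μs (νs + d) ηs
    simp only [hLrs, hL', ← real_inner_self_eq_norm_sq, inner_sub_left, inner_sub_right,
      inner_add_left, inner_add_right, real_inner_smul_left] at h ⊢
    simp only [real_inner_comm d] at h ⊢
    linarith
  -- perturbation in η
  have hη : (bs - qs) + s • (μs - ηs) = 0 := by
    apply eq_zero_of_inner_le_sq _ s hs
    intro d
    have h := hmax μs νs (ηs + d)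
    simp only [hLrs, hL', ← real_inner_self_eq_norm_sq, inner_sub_left, inner_sub_right,
      inner_add_left, inner_add_right, real_inner_smul_left] at h ⊢
    simp only [real_inner_comm d] at h ⊢
    linarith
  have hrs : (1 : ℝ) + s * r ≠ 0 := by positivity
  have hp' : r • (B φs - ps) = μs - νs := sub_eq_zero.mp hp
  have hb' : μs - ηs = r • (bs - qs) := sub_eq_zero.mp hb
  have hE1 : B φs - ps = 0 := by
    rw [← hp', smul_smul] at hν
    have h1 : (1 + s * r) • (B φs - ps) = 0 := by rw [add_smul, one_smul]; exact hν
    rcases smul_eq_zero.mp h1 with h | h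
    · exact absurd h hrs
    · exact h
  have hE2 : bs - qs = 0 := by
    rw [hb', smul_smul] at hη
    have h1 : (1 + s * r) • (bs - qs) = 0 := by rw [add_smul, one_smul]; exact hη
    rcases smul_eq_zero.mp h1 with h | h
    · exact absurd h hrs
    · exact h
  have ha : μs - νs = 0 := by rw [← hp', hE1, smul_zero]
  have he : μs - ηs = 0 := by rw [hb', hE2, smul_zero]
  have hBp : B φs = ps := sub_eq_zero.mp hE1
  have hbq : bs = qs := sub_eq_zero.mp hE2
  have hμν : μs = νs := sub_eq_zero.mp ha
  have hμη : μs = ηs := sub_eq_zero.mp he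
  have hνη : νs = ηs := hμν ▸ hμη
  refine ⟨hBp, hbq, hμν, hνη, fun φ q p b μ ν η => ?_⟩
  -- Lrs at the saddle equals L' at the saddle
  have hstar : Lrs φs qs ps bs μs νs ηs = L' φs qs ps bs μs νs ηs := by
    rw [hLrs, hE1, hE2, ha, he]
    simp
  constructor
  · -- first inequality
    have e1 : L' φs qs ps bs μ ν η = Lrs φs qs ps bs μ μ μ := by
      rw [hLrs, hL', hL', hE1, hE2]
      simp
    rw [e1, ← hstar]
    exact hmax μ μ μ
  · -- second inequality
    have e2 : Lrs φ q (B φ) q μs νs ηs = L' φ q p b μs νs ηs := by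
      rw [hLrs, hL', hL', ← hμν, ← hμη]
      have : ⟪μs, p - b⟫ + ⟪μs, B φ - p⟫ + ⟪μs, b - q⟫ = ⟪μs, B φ - q⟫ := by
        rw [← inner_add_right, ← inner_add_right]
        congr 1
        abel
      simp only [sub_self, inner_zero_right, norm_zero]
      linarith [this]
    rw [← hstar, ← e2]
    exact hmin φ q (B φ) q
end

section
/- For Algorithm-1 iterates with a saddle point (φ*, q*, μ*) of L, p* = Bφ*, b* = q*, and step size 0 < ρ < (2rs² + s)/(1 + rs)², the real sequence n ↦ ‖pⁿ − p*‖² + ‖bⁿ − b*‖² + ρs‖νⁿ⁻¹ − μ*‖² + ρs‖ηⁿ⁻¹ − μ*‖² is nonincreasing; in particular the sequences (‖pⁿ − p*‖), (‖bⁿ − b*‖), (‖νⁿ − μ*‖), (‖ηⁿ − μ*‖), (‖Bφⁿ − Bφ*‖), (‖qⁿ − q*‖) and (‖μⁿ − μ*‖) are bounded. -/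
/-!
Write `κ = r + 1/s`. Testing the optimality conditions (i), (iii), (iv) of a step against the
saddle point, and the saddle-point inequalities against the iterate, and adding, gives three
inner-product inequalities; this is monotonicity of the subdifferentials of `F`, `G`, `I`.
Expanding the squares in the update (v) and in `νⁿ − μ* = (μⁿ − μ*) + (Bφⁿ − pⁿ)/s` (and the
same for `ηⁿ`), the Lyapunov quantity decreases by `2ρ` times these inequalities plus
`ρ (2κ − ρκ² − 1/s)(‖Bφⁿ − pⁿ‖² + ‖bⁿ − qⁿ‖²)`, which is nonnegative exactly under the step-size
condition. Boundedness follows since each term is at most the first value of the Lyapunov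
sequence, and `Bφⁿ − pⁿ`, `bⁿ − qⁿ` are differences of consecutive `pⁿ`, `bⁿ` divided by `ρκ`.
-/

open RealInnerProductSpace

section Normed

variable {E : Type*} [SeminormedAddCommGroup E]

lemma sq_norms_le_of_lyapunov_succ_le {c : ℝ} (hc : 0 ≤ c) {p b ν η : ℕ → E} {ps bs μs : E}
    (hmono : ∀ n, 1 ≤ n →
      ‖p (n + 1) - ps‖ ^ 2 + ‖b (n + 1) - bs‖ ^ 2 + c * ‖ν n - μs‖ ^ 2 + c * ‖η n - μs‖ ^ 2
        ≤ ‖p n - ps‖ ^ 2 + ‖b n - bs‖ ^ 2 + c * ‖ν (n - 1) - μs‖ ^ 2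
          + c * ‖η (n - 1) - μs‖ ^ 2) {n : ℕ} (hn : 1 ≤ n) :
    let M := ‖p 1 - ps‖ ^ 2 + ‖b 1 - bs‖ ^ 2 + c * ‖ν 0 - μs‖ ^ 2 + c * ‖η 0 - μs‖ ^ 2
    ‖p n - ps‖ ^ 2 ≤ M ∧ ‖b n - bs‖ ^ 2 ≤ M ∧ c * ‖ν n - μs‖ ^ 2 ≤ M ∧ c * ‖η n - μs‖ ^ 2 ≤ M := by
  have hE := antitoneOn_nat_Ici_of_succ_le (f := fun n => ‖p n - ps‖ ^ 2 + ‖b n - bs‖ ^ 2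
    + c * ‖ν (n - 1) - μs‖ ^ 2 + c * ‖η (n - 1) - μs‖ ^ 2) hmono
  have h₁ : _ ≤ _ := hE (le_refl 1) hn hn
  have h₂ : _ ≤ _ := hE (le_refl 1) (show 1 ≤ n + 1 by omega) (show 1 ≤ n + 1 by omega)
  simp only [Nat.add_sub_cancel, Nat.sub_self] at h₁ h₂
  have hc' : ∀ v : E, 0 ≤ c * ‖v‖ ^ 2 := fun v => by positivity
  refine ⟨?_, ?_, ?_, ?_⟩ <;>
    linarith [hc' (ν (n - 1) - μs), hc' (η (n - 1) - μs), hc' (ν n - μs), hc' (η n - μs),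
      sq_nonneg ‖p n - ps‖, sq_nonneg ‖b n - bs‖, sq_nonneg ‖p (n + 1) - ps‖,
      sq_nonneg ‖b (n + 1) - bs‖]

end Normed

section NormedSpace

variable {E : Type*} [SeminormedAddCommGroup E] [NormedSpace ℝ E]

lemma norm_le_of_smul_eq_sub {t a : ℝ} (ht : 0 < t) {v x y : E} (h : t • v = x - y)
    (hx : ‖x‖ ≤ a) (hy : ‖y‖ ≤ a) : ‖v‖ ≤ 2 * a / t := by
  rw [le_div_iff₀ ht, mul_comm, ← abs_of_pos ht, ← Real.norm_eq_abs, ← norm_smul, h]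
  linarith [norm_sub_le x y]

end NormedSpace

lemma step_size_bound {r s ρ : ℝ} (hs : 0 < s) (hκ : 0 < r + 1 / s)
    (hρ : ρ < (2 * r * s ^ 2 + s) / (1 + r * s) ^ 2) :
    ρ * (r + 1 / s) ^ 2 + s⁻¹ ≤ 2 * (r + 1 / s) := by
  have h₁ : (1 + r * s) ^ 2 = (r + 1 / s) ^ 2 * s ^ 2 := by field_simp; ring
  have h₂ : 2 * r * s ^ 2 + s = (2 * (r + 1 / s) - s⁻¹) * s ^ 2 := by field_simp; ring
  rw [h₁, h₂, mul_div_mul_right _ _ (by positivity), lt_div_iff₀ (by positivity)] at hρ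
  linarith

section InnerProduct

variable {H : Type*} [NormedAddCommGroup H] [InnerProductSpace ℝ H]

lemma norm_add_smul_sq_real (x y : H) (t : ℝ) :
    ‖x + t • y‖ ^ 2 = ‖x‖ ^ 2 + 2 * t * ⟪x, y⟫ + t ^ 2 * ‖y‖ ^ 2 := by
  rw [norm_add_sq_real, real_inner_smul_right, norm_smul, mul_pow, Real.norm_eq_abs, sq_abs]
  ring

lemma norm_sub_smul_sq_real (x y : H) (t : ℝ) :
    ‖x - t • y‖ ^ 2 = ‖x‖ ^ 2 - 2 * t * ⟪x, y⟫ + t ^ 2 * ‖y‖ ^ 2 := by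
  rw [sub_eq_add_neg, ← neg_smul, norm_add_smul_sq_real]
  ring

lemma mul_norm_add_inv_smul_sq {s : ℝ} (hs : s ≠ 0) (x y : H) :
    s * ‖x + s⁻¹ • y‖ ^ 2 = s * ‖x‖ ^ 2 + 2 * ⟪x, y⟫ + s⁻¹ * ‖y‖ ^ 2 := by
  rw [norm_add_smul_sq_real]
  field_simp

/-- In the application `x = pⁿ − p*`, `y = bⁿ − b*`, `P = Bφⁿ − pⁿ`, `Q = bⁿ − qⁿ`, `m = μⁿ − μ*`,
`u = νⁿ⁻¹ − μⁿ`, `w = ηⁿ⁻¹ − μⁿ` and `κ = r + 1/s`. -/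
lemma lyapunov_descent {κ s ρ : ℝ} (hs : 0 < s) (hρ : 0 ≤ ρ) (hκ : ρ * κ ^ 2 + s⁻¹ ≤ 2 * κ)
    {x y P Q m u w : H} (hP : ⟪m + κ • P, P + x⟫ ≤ 0) (hQ : 0 ≤ ⟪m + κ • Q, y - Q⟫)
    (hm : 0 ≤ ⟪m, x - y⟫ + s * ⟪m, u⟫ + s * ⟪m, w⟫) :
    ‖x + (ρ * κ) • P‖ ^ 2 + ‖y - (ρ * κ) • Q‖ ^ 2
        + ρ * s * ‖m + s⁻¹ • P‖ ^ 2 + ρ * s * ‖m + s⁻¹ • Q‖ ^ 2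
      ≤ ‖x‖ ^ 2 + ‖y‖ ^ 2 + ρ * s * ‖m + u‖ ^ 2 + ρ * s * ‖m + w‖ ^ 2 := by
  rw [norm_add_smul_sq_real, norm_sub_smul_sq_real, mul_assoc ρ s, mul_assoc ρ s,
    mul_assoc ρ s, mul_assoc ρ s, mul_norm_add_inv_smul_sq hs.ne',
    mul_norm_add_inv_smul_sq hs.ne', norm_add_sq_real m u, norm_add_sq_real m w]
  simp only [inner_add_left, inner_add_right, inner_sub_right, real_inner_smul_left,
    real_inner_self_eq_norm_sq] at hP hQ hm
  rw [real_inner_comm x P] at hP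
  rw [real_inner_comm y Q] at hQ
  have hPQ : 0 ≤ ρ * (2 * κ - ρ * κ ^ 2 - s⁻¹) * (‖P‖ ^ 2 + ‖Q‖ ^ 2) :=
    mul_nonneg (mul_nonneg hρ (by linarith)) (by positivity)
  linarith [mul_le_mul_of_nonneg_left hP hρ, mul_le_mul_of_nonneg_left hQ hρ,
    mul_le_mul_of_nonneg_left hm hρ, mul_nonneg (mul_nonneg hρ hs.le) (sq_nonneg ‖u‖),
    mul_nonneg (mul_nonneg hρ hs.le) (sq_nonneg ‖w‖)]

end InnerProduct

section Lagrangian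

variable {V H : Type*} [NormedAddCommGroup V] [InnerProductSpace ℝ V]
  [NormedAddCommGroup H] [InnerProductSpace ℝ H]
  (B : V →L[ℝ] H) (F : H → ℝ) (G : V → ℝ) (I : H → ℝ)

def lagrangian (φ : V) (q μ : H) : ℝ :=
  F q + G φ - I μ + ⟪μ, B φ - q⟫

variable {B F G I} {φs : V} {qs μs : H}

lemma G_sub_le_inner_of_lagrangian_le {φ : V}
    (h : lagrangian B F G I φs qs μs ≤ lagrangian B F G I φ qs μs) :
    G φs - G φ ≤ ⟪μs, B φ - B φs⟫ := by
  have e : ⟪μs, B φ - B φs⟫ = ⟪μs, B φ - qs⟫ - ⟪μs, B φs - qs⟫ := by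
    rw [← inner_sub_right, sub_sub_sub_cancel_right]
  unfold lagrangian at h
  linarith

lemma inner_le_F_sub_of_lagrangian_le {q : H}
    (h : lagrangian B F G I φs qs μs ≤ lagrangian B F G I φs q μs) :
    ⟪μs, q - qs⟫ ≤ F q - F qs := by
  have e : ⟪μs, q - qs⟫ = ⟪μs, B φs - qs⟫ - ⟪μs, B φs - q⟫ := by
    rw [← inner_sub_right, sub_sub_sub_cancel_left]
  unfold lagrangian at h
  linarith

lemma I_sub_le_inner_of_lagrangian_le {μ : H}
    (h : lagrangian B F G I φs qs μ ≤ lagrangian B F G I φs qs μs) :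
    I μs - I μ ≤ ⟪μs - μ, B φs - qs⟫ := by
  unfold lagrangian at h
  linarith [inner_sub_left (𝕜 := ℝ) μs μ (B φs - qs)]

end Lagrangian

section Step

variable {V H : Type*} [NormedAddCommGroup V] [InnerProductSpace ℝ V]
  [NormedAddCommGroup H] [InnerProductSpace ℝ H]
  {B : V →L[ℝ] H} {F : H → ℝ} {G : V → ℝ} {I : H → ℝ} {φs φ : V} {qs μs q μ p b ν η ν₀ η₀ : H}

lemma algorithm1_lyapunov_step {r s ρ : ℝ} (hs : 0 < s) (hρ : 0 ≤ ρ)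
    (hκ : ρ * (r + 1 / s) ^ 2 + s⁻¹ ≤ 2 * (r + 1 / s))
    (hGs : G φs - G φ ≤ ⟪μs, B φ - B φs⟫) (hFs : ⟪μs, q - qs⟫ ≤ F q - F qs)
    (hIs : I μs - I μ ≤ ⟪μs - μ, B φs - qs⟫)
    (hi : I μs - I μ + ⟪μ - μs, p - b⟫ - s * ⟪μ - μs, μ - ν₀⟫ - s * ⟪μ - μs, μ - η₀⟫ ≥ 0)
    (hν : ν = s⁻¹ • (B φ - p) + μ) (hη : η = s⁻¹ • (b - q) + μ)
    (hiii : G φs - G φ + ⟪ν + r • (B φ - p), B φs - B φ⟫ ≥ 0)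
    (hiv : F qs - F q + ⟪η + r • (b - q), q - qs⟫ ≥ 0) :
    ‖p + (ρ * (r + 1 / s)) • (B φ - p) - B φs‖ ^ 2 + ‖b - (ρ * (r + 1 / s)) • (b - q) - qs‖ ^ 2
        + ρ * s * ‖ν - μs‖ ^ 2 + ρ * s * ‖η - μs‖ ^ 2
      ≤ ‖p - B φs‖ ^ 2 + ‖b - qs‖ ^ 2 + ρ * s * ‖ν₀ - μs‖ ^ 2 + ρ * s * ‖η₀ - μs‖ ^ 2 := by
  subst hν hη
  have hP : ⟪(μ - μs) + (r + 1 / s) • (B φ - p), (B φ - p) + (p - B φs)⟫ ≤ 0 := by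
    rw [show (μ - μs) + (r + 1 / s) • (B φ - p) = s⁻¹ • (B φ - p) + μ + r • (B φ - p) - μs by
      module, sub_add_sub_cancel, inner_sub_left]
    rw [← neg_sub (B φ) (B φs), inner_neg_right] at hiii
    linarith
  have hQ : 0 ≤ ⟪(μ - μs) + (r + 1 / s) • (b - q), (b - qs) - (b - q)⟫ := by
    rw [show (μ - μs) + (r + 1 / s) • (b - q) = s⁻¹ • (b - q) + μ + r • (b - q) - μs by
      module, sub_sub_sub_cancel_left, inner_sub_left]
    linarith
  have hm : 0 ≤ ⟪μ - μs, (p - B φs) - (b - qs)⟫ + s * ⟪μ - μs, ν₀ - μ⟫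
      + s * ⟪μ - μs, η₀ - μ⟫ := by
    rw [show (p - B φs) - (b - qs) = (p - b) - (B φs - qs) by abel, inner_sub_right,
      ← neg_sub μ ν₀, ← neg_sub μ η₀, inner_neg_right, inner_neg_right]
    rw [← neg_sub μ μs, inner_neg_left] at hIs
    linarith
  convert lyapunov_descent hs hρ hκ hP hQ hm using 6 <;> abel

lemma algorithm1_bounded {r s ρ : ℝ} (hs : 0 < s) (hρ : 0 < ρ) (hκ : 0 < r + 1 / s)
    {φ : ℕ → V} {q μ p b ν η : ℕ → H}
    (hii : ∀ n, 1 ≤ n → ν n = s⁻¹ • (B (φ n) - p n) + μ n ∧ η n = s⁻¹ • (b n - q n) + μ n)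
    (hv : ∀ n, 1 ≤ n → p (n + 1) = p n + (ρ * (r + 1 / s)) • (B (φ n) - p n) ∧
      b (n + 1) = b n - (ρ * (r + 1 / s)) • (b n - q n))
    (hmono : ∀ n, 1 ≤ n →
      ‖p (n + 1) - B φs‖ ^ 2 + ‖b (n + 1) - qs‖ ^ 2 + ρ * s * ‖ν n - μs‖ ^ 2
          + ρ * s * ‖η n - μs‖ ^ 2
        ≤ ‖p n - B φs‖ ^ 2 + ‖b n - qs‖ ^ 2 + ρ * s * ‖ν (n - 1) - μs‖ ^ 2
          + ρ * s * ‖η (n - 1) - μs‖ ^ 2) :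
    ∃ C : ℝ, ∀ n, 1 ≤ n →
      ‖p n - B φs‖ ≤ C ∧ ‖b n - qs‖ ≤ C ∧ ‖ν n - μs‖ ≤ C ∧ ‖η n - μs‖ ≤ C ∧
      ‖B (φ n) - B φs‖ ≤ C ∧ ‖q n - qs‖ ≤ C ∧ ‖μ n - μs‖ ≤ C := by
  have hE (n : ℕ) (hn : 1 ≤ n) := sq_norms_le_of_lyapunov_succ_le (mul_pos hρ hs).le hmono hn
  set M := ‖p 1 - B φs‖ ^ 2 + ‖b 1 - qs‖ ^ 2 + ρ * s * ‖ν 0 - μs‖ ^ 2 + ρ * s * ‖η 0 - μs‖ ^ 2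
  set R := √M
  set R' := √(M / (ρ * s))
  set D := 2 * R / (ρ * (r + 1 / s))
  have hp (n : ℕ) (hn : 1 ≤ n) : ‖p n - B φs‖ ≤ R := Real.le_sqrt_of_sq_le (hE n hn).1
  have hb (n : ℕ) (hn : 1 ≤ n) : ‖b n - qs‖ ≤ R := Real.le_sqrt_of_sq_le (hE n hn).2.1
  have hν (n : ℕ) (hn : 1 ≤ n) : ‖ν n - μs‖ ≤ R' :=
    Real.le_sqrt_of_sq_le ((le_div_iff₀' (mul_pos hρ hs)).2 (hE n hn).2.2.1)
  have hη (n : ℕ) (hn : 1 ≤ n) : ‖η n - μs‖ ≤ R' :=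
    Real.le_sqrt_of_sq_le ((le_div_iff₀' (mul_pos hρ hs)).2 (hE n hn).2.2.2)
  have hBp (n : ℕ) (hn : 1 ≤ n) : ‖B (φ n) - p n‖ ≤ D :=
    norm_le_of_smul_eq_sub (by positivity) (by rw [(hv n hn).1]; abel) (hp (n + 1) (by omega))
      (hp n hn)
  have hbq (n : ℕ) (hn : 1 ≤ n) : ‖b n - q n‖ ≤ D :=
    norm_le_of_smul_eq_sub (by positivity) (by rw [(hv n hn).2]; abel) (hb n hn)
      (hb (n + 1) (by omega))
  have hR : 0 ≤ R := Real.sqrt_nonneg _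
  have hR' : 0 ≤ R' := Real.sqrt_nonneg _
  have hD : 0 ≤ D := by positivity
  refine ⟨R + R' + D + D / s, fun n hn => ⟨?_, ?_, ?_, ?_, ?_, ?_, ?_⟩⟩
  · linarith [hp n hn, div_nonneg hD hs.le]
  · linarith [hb n hn, div_nonneg hD hs.le]
  · linarith [hν n hn, div_nonneg hD hs.le]
  · linarith [hη n hn, div_nonneg hD hs.le]
  · have := norm_add_le (B (φ n) - p n) (p n - B φs)
    rw [sub_add_sub_cancel] at this
    linarith [hBp n hn, hp n hn, div_nonneg hD hs.le]
  · have := norm_sub_le (b n - qs) (b n - q n)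
    rw [sub_sub_sub_cancel_left] at this
    linarith [hbq n hn, hb n hn, div_nonneg hD hs.le]
  · have hs' : ‖s⁻¹ • (B (φ n) - p n)‖ ≤ D / s := by
      rw [norm_smul, Real.norm_of_nonneg (inv_nonneg.2 hs.le), inv_mul_eq_div]
      exact div_le_div_of_nonneg_right (hBp n hn) hs.le
    rw [show μ n - μs = (ν n - μs) - s⁻¹ • (B (φ n) - p n) by rw [(hii n hn).1]; abel]
    linarith [norm_sub_le (ν n - μs) (s⁻¹ • (B (φ n) - p n)), hν n hn]

end Step

theorem algorithm1_monotone_and_bounded_general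
    {V H : Type*} [NormedAddCommGroup V] [InnerProductSpace ℝ V]
    [NormedAddCommGroup H] [InnerProductSpace ℝ H]
    (B : V →L[ℝ] H) (F : H → ℝ) (G : V → ℝ) (I : H → ℝ)
    (L : V → H → H → ℝ)
    (hL : ∀ (φ' : V) (q' μ' : H), L φ' q' μ' = F q' + G φ' - I μ' + ⟪μ', B φ' - q'⟫)
    (r s ρ : ℝ) (hr : 0 < r) (hs : 0 < s)
    (hρ1 : 0 < ρ) (hρ2 : ρ < (2*r*s^2 + s) / (1 + r*s)^2)
    (φs : V) (qs μs : H) (ps bs : H) (hps : ps = B φs) (hbs : bs = qs)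
    (hsaddle : ∀ (φ' : V) (q' μ' : H), L φs qs μ' ≤ L φs qs μs ∧ L φs qs μs ≤ L φ' q' μs)
    (φ : ℕ → V) (q μ p b ν η : ℕ → H)
    (hi : ∀ n, 1 ≤ n → ∀ μ' : H,
      I μ' - I (μ n) + ⟪μ n - μ', p n - b n⟫ - s * ⟪μ n - μ', μ n - ν (n-1)⟫
        - s * ⟪μ n - μ', μ n - η (n-1)⟫ ≥ 0)
    (hii : ∀ n, 1 ≤ n →
      ν n = s⁻¹ • (B (φ n) - p n) + μ n ∧ η n = s⁻¹ • (b n - q n) + μ n)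
    (hiii : ∀ n, 1 ≤ n → ∀ φ' : V,
      G φ' - G (φ n) + ⟪ν n + r • (B (φ n) - p n), B φ' - B (φ n)⟫ ≥ 0)
    (hiv : ∀ n, 1 ≤ n → ∀ q' : H,
      F q' - F (q n) + ⟪η n + r • (b n - q n), q n - q'⟫ ≥ 0)
    (hv : ∀ n, 1 ≤ n →
      p (n+1) = p n + (ρ * (r + 1/s)) • (B (φ n) - p n) ∧
      b (n+1) = b n - (ρ * (r + 1/s)) • (b n - q n))
    :
    (∀ n, 1 ≤ n →
      ‖p (n+1) - ps‖^2 + ‖b (n+1) - bs‖^2 + ρ*s*‖ν n - μs‖^2 + ρ*s*‖η n - μs‖^2 ≤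
      ‖p n - ps‖^2 + ‖b n - bs‖^2 + ρ*s*‖ν (n-1) - μs‖^2 + ρ*s*‖η (n-1) - μs‖^2) ∧
    (∃ C : ℝ, ∀ n, 1 ≤ n →
      ‖p n - ps‖ ≤ C ∧ ‖b n - bs‖ ≤ C ∧ ‖ν n - μs‖ ≤ C ∧ ‖η n - μs‖ ≤ C ∧
      ‖B (φ n) - B φs‖ ≤ C ∧ ‖q n - qs‖ ≤ C ∧ ‖μ n - μs‖ ≤ C) := by
  subst ps bs
  obtain rfl : L = lagrangian B F G I := funext₃ hL
  have hκ : 0 < r + 1 / s := by positivity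
  have hmono (n : ℕ) (hn : 1 ≤ n) :
      ‖p (n+1) - B φs‖^2 + ‖b (n+1) - qs‖^2 + ρ*s*‖ν n - μs‖^2 + ρ*s*‖η n - μs‖^2 ≤
      ‖p n - B φs‖^2 + ‖b n - qs‖^2 + ρ*s*‖ν (n-1) - μs‖^2 + ρ*s*‖η (n-1) - μs‖^2 := by
    rw [(hv n hn).1, (hv n hn).2]
    exact algorithm1_lyapunov_step hs hρ1.le (step_size_bound hs hκ hρ2)
      (G_sub_le_inner_of_lagrangian_le (hsaddle _ qs μs).2)
      (inner_le_F_sub_of_lagrangian_le (hsaddle φs _ μs).2)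
      (I_sub_le_inner_of_lagrangian_le (hsaddle φs qs _).1)
      (hi n hn μs) (hii n hn).1 (hii n hn).2 (hiii n hn φs) (hiv n hn qs)
  exact ⟨hmono, algorithm1_bounded hs hρ1 hκ hii hv hmono⟩

/-- For Algorithm-1 iterates, the sequence
n ↦ ‖pⁿ − p*‖² + ‖bⁿ − b*‖² + ρs‖νⁿ⁻¹ − μ*‖² + ρs‖ηⁿ⁻¹ − μ*‖² is nonincreasing,
and the iterate sequences are bounded. -/
theorem algorithm1_monotone_and_bounded
    {V H : Type*} [NormedAddCommGroup V] [InnerProductSpace ℝ V] [CompleteSpace V]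
    [NormedAddCommGroup H] [InnerProductSpace ℝ H] [CompleteSpace H]
    (B : V →L[ℝ] H) (F : H → ℝ) (G : V → ℝ) (I : H → ℝ)
    (hFconv : ConvexOn ℝ Set.univ F) (hFlsc : LowerSemicontinuous F)
    (hGconv : ConvexOn ℝ Set.univ G) (hGlsc : LowerSemicontinuous G)
    (hIconv : ConvexOn ℝ Set.univ I) (hIlsc : LowerSemicontinuous I)
    (L : V → H → H → ℝ)
    (hL : ∀ (φ' : V) (q' μ' : H), L φ' q' μ' = F q' + G φ' - I μ' + ⟪μ', B φ' - q'⟫)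
    (r s ρ : ℝ) (hr : 0 < r) (hs : 0 < s)
    (hρ1 : 0 < ρ) (hρ2 : ρ < (2*r*s^2 + s) / (1 + r*s)^2)
    (φs : V) (qs μs : H) (ps bs : H) (hps : ps = B φs) (hbs : bs = qs)
    (hsaddle : ∀ (φ' : V) (q' μ' : H), L φs qs μ' ≤ L φs qs μs ∧ L φs qs μs ≤ L φ' q' μs)
    (φ : ℕ → V) (q μ p b ν η : ℕ → H)
    (hi : ∀ n, 1 ≤ n → ∀ μ' : H,
      I μ' - I (μ n) + ⟪μ n - μ', p n - b n⟫ - s * ⟪μ n - μ', μ n - ν (n-1)⟫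
        - s * ⟪μ n - μ', μ n - η (n-1)⟫ ≥ 0)
    (hii : ∀ n, 1 ≤ n →
      ν n = s⁻¹ • (B (φ n) - p n) + μ n ∧ η n = s⁻¹ • (b n - q n) + μ n)
    (hiii : ∀ n, 1 ≤ n → ∀ φ' : V,
      G φ' - G (φ n) + ⟪ν n + r • (B (φ n) - p n), B φ' - B (φ n)⟫ ≥ 0)
    (hiv : ∀ n, 1 ≤ n → ∀ q' : H,
      F q' - F (q n) + ⟪η n + r • (b n - q n), q n - q'⟫ ≥ 0)
    (hv : ∀ n, 1 ≤ n →
      p (n+1) = p n + (ρ * (r + 1/s)) • (B (φ n) - p n) ∧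
      b (n+1) = b n - (ρ * (r + 1/s)) • (b n - q n))
    :
    (∀ n, 1 ≤ n →
      ‖p (n+1) - ps‖^2 + ‖b (n+1) - bs‖^2 + ρ*s*‖ν n - μs‖^2 + ρ*s*‖η n - μs‖^2 ≤
      ‖p n - ps‖^2 + ‖b n - bs‖^2 + ρ*s*‖ν (n-1) - μs‖^2 + ρ*s*‖η (n-1) - μs‖^2) ∧
    (∃ C : ℝ, ∀ n, 1 ≤ n →
      ‖p n - ps‖ ≤ C ∧ ‖b n - bs‖ ≤ C ∧ ‖ν n - μs‖ ≤ C ∧ ‖η n - μs‖ ≤ C ∧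
      ‖B (φ n) - B φs‖ ≤ C ∧ ‖q n - qs‖ ≤ C ∧ ‖μ n - μs‖ ≤ C) :=
  algorithm1_monotone_and_bounded_general B F G I L hL r s ρ hr hs hρ1 hρ2 φs qs μs ps bs hps hbs
    hsaddle φ q μ p b ν η hi hii hiii hiv hv
end

section
/- For Algorithm-1 iterates with a saddle point (φ*, q*, μ*) of L, p* = Bφ*, b* = q*, and step size 0 < ρ < (2rs² + s)/(1 + rs)², one has ‖Bφⁿ − pⁿ‖ → 0, ‖bⁿ − qⁿ‖ → 0, ‖μⁿ − νⁿ‖ → 0, ‖μⁿ − ηⁿ‖ → 0, ‖νⁿ − νⁿ⁻¹‖ → 0, ‖ηⁿ − ηⁿ⁻¹‖ → 0, ‖pⁿ⁺¹ − pⁿ‖ → 0, ‖qⁿ⁺¹ − qⁿ‖ → 0, and I(μⁿ) − I(μ*) − ⟨μⁿ − μ*, p* − b*⟩ → 0 as n → ∞. -/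
/-!
Write `d = Bφ - p`, `e = b - q`, `P = p - Bφ*`, `Q = b - q*`. Testing the variational inequalities
of the `μ`-, `φ`- and `q`-steps at the saddle point, and the saddle inequalities at the iterates,
gives three monotonicity inequalities. Twice `ρ` times their sum is exactly the one-step decrease
of the energy `‖Pⁿ‖² + ‖Qⁿ‖² + ρ s (‖νⁿ⁻¹ - μ*‖² + ‖ηⁿ⁻¹ - μ*‖²)` minus the dissipation
`c (‖dⁿ‖² + ‖eⁿ‖²) + ρ s (‖μⁿ - νⁿ⁻¹‖² + ‖μⁿ - ηⁿ⁻¹‖²)`, where `c = ρ (2r + 1/s) - ρ² (r + 1/s)²` is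
positive exactly under the step-size condition. Hence the dissipation is summable, so it tends to
zero, and the energy bounds the iterates. The remaining residuals are linear combinations of the
dissipated ones, and the dual gap is squeezed between `0` and inner products of bounded sequences
with vanishing ones.
-/

open RealInnerProductSpace Filter Topology

section NormedSequences

theorem tendsto_zero_of_add_le {E a : ℕ → ℝ} {N : ℕ} (hE : ∀ n, 0 ≤ E n) (ha : ∀ n, 0 ≤ a n)
    (h : ∀ n ≥ N, E (n + 1) + a n ≤ E n) : Tendsto a atTop (𝓝 0) := by
  have hsum : ∀ k, ∑ i ∈ Finset.range k, a (i + N) + E (k + N) ≤ E N := by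
    intro k
    induction k with
    | zero => simp
    | succ k ih =>
      rw [Finset.sum_range_succ, add_right_comm k 1 N]
      linarith [h (k + N) (Nat.le_add_left N k)]
  have hsummable : Summable fun i => a (i + N) :=
    summable_of_sum_range_le (fun i => ha _) fun k => by linarith [hsum k, hE (k + N)]
  exact (tendsto_add_atTop_iff_nat N).mp hsummable.tendsto_atTop_zero

variable {ι E : Type*} [SeminormedAddGroup E] {l : Filter ι} {f : ι → E} {c : ℝ}

theorem norm_le_sqrt_of_mul_norm_sq_le {x : E} {C : ℝ} (hc : 0 < c) (h : c * ‖x‖ ^ 2 ≤ C) :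
    ‖x‖ ≤ √(C / c) := by
  rw [← abs_norm]
  exact Real.abs_le_sqrt ((le_div_iff₀ hc).mpr (by linarith))

theorem tendsto_zero_of_mul_norm_sq_le {a : ι → ℝ} (hc : 0 < c) (h : ∀ i, c * ‖f i‖ ^ 2 ≤ a i)
    (ha : Tendsto a l (𝓝 0)) : Tendsto f l (𝓝 0) :=
  squeeze_zero_norm (fun i => norm_le_sqrt_of_mul_norm_sq_le hc (h i))
    (by simpa using (ha.div_const c).sqrt)

theorem isBigO_one_of_mul_norm_sq_le {C : ℝ} (hc : 0 < c) (h : ∀ᶠ i in l, c * ‖f i‖ ^ 2 ≤ C) :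
    f =O[l] (fun _ => (1 : ℝ)) :=
  (isBoundedUnder_of_eventually_le
    (h.mono fun _ => norm_le_sqrt_of_mul_norm_sq_le hc)).isBigO_one ℝ

def energy (ρ s : ℝ) (P Q X Y : E) : ℝ :=
  ‖P‖ ^ 2 + ‖Q‖ ^ 2 + ρ * s * (‖X‖ ^ 2 + ‖Y‖ ^ 2)

theorem energy_nonneg {ρ s : ℝ} (hρs : 0 ≤ ρ * s) (P Q X Y : E) : 0 ≤ energy ρ s P Q X Y := by
  unfold energy
  positivity

end NormedSequences

section Differences

variable {E : Type*} [SeminormedAddCommGroup E] [NormedSpace ℝ E] {c : ℝ} {x y d : ℕ → E}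

theorem tendsto_sub_of_eq_smul_add (hx : ∀ n ≥ 1, x n = c • d n + y n)
    (hd : Tendsto d atTop (𝓝 0)) : Tendsto (fun n => y n - x n) atTop (𝓝 0) := by
  refine (by simpa using (hd.const_smul c).neg :
    Tendsto (fun n => -(c • d n)) atTop (𝓝 0)).congr' ?_
  filter_upwards [eventually_ge_atTop 1] with n hn
  rw [hx n hn]
  abel

theorem tendsto_sub_pred_of_eq_smul_add (hx : ∀ n ≥ 1, x n = c • d n + y n)
    (hd : Tendsto d atTop (𝓝 0)) (hy : Tendsto (fun n => y n - x (n - 1)) atTop (𝓝 0)) :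
    Tendsto (fun n => x n - x (n - 1)) atTop (𝓝 0) := by
  refine (by simpa using (hd.const_smul c).add hy :
    Tendsto (fun n => c • d n + (y n - x (n - 1))) atTop (𝓝 0)).congr' ?_
  filter_upwards [eventually_ge_atTop 1] with n hn
  rw [hx n hn]
  abel

end Differences

noncomputable def damping (r s ρ : ℝ) : ℝ := ρ * (2 * r + s⁻¹) - (ρ * (r + s⁻¹)) ^ 2

theorem damping_pos {r s ρ : ℝ} (hr : 0 < r) (hs : 0 < s) (hρ : 0 < ρ)
    (hρ' : ρ < (2 * r * s ^ 2 + s) / (1 + r * s) ^ 2) : 0 < damping r s ρ := by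
  have h : ρ * (1 + r * s) ^ 2 < 2 * r * s ^ 2 + s := (lt_div_iff₀ (by positivity)).mp hρ'
  have e : damping r s ρ = ρ / s ^ 2 * (2 * r * s ^ 2 + s - ρ * (1 + r * s) ^ 2) := by
    unfold damping
    field_simp
    ring
  rw [e]
  exact mul_pos (by positivity) (by linarith)

section InnerProduct

variable {H : Type*} [NormedAddCommGroup H] [InnerProductSpace ℝ H]

theorem tendsto_inner_zero_of_isBigO_one {ι : Type*} {l : Filter ι} {f g : ι → H}
    (hf : Tendsto f l (𝓝 0)) (hg : g =O[l] (fun _ => (1 : ℝ))) :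
    Tendsto (fun i => ⟪f i, g i⟫) l (𝓝 0) :=
  hf.op_zero_isBoundedUnder_le ((Asymptotics.isBigO_one_iff ℝ).mp hg) (fun x y => ⟪x, y⟫)
    norm_inner_le_norm

/-- `-u` and `-u'` are subgradients of `f` (through `A`) at `x` and `x'`: this is the monotonicity
of the subdifferential. -/
theorem inner_sub_sub_nonpos_of_forall_le {α : Type*} {f : α → ℝ} {A : α → H} {x x' : α}
    {u u' : H} (hx : ∀ y, f x ≤ f y + ⟪u, A y - A x⟫)
    (hx' : ∀ y, f x' ≤ f y + ⟪u', A y - A x'⟫) :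
    ⟪u - u', A x - A x'⟫ ≤ 0 := by
  have h1 := hx x'
  have h2 := hx' x
  rw [← neg_sub (A x) (A x'), inner_neg_right] at h1
  rw [inner_sub_left]
  linarith

/-- The defect of this inequality is `2 ρ` times the sum of the three hypotheses. -/
theorem energy_step {r s ρ : ℝ} (hs : s ≠ 0) (hρ : 0 ≤ ρ) {P Q d e m X Y : H}
    (hG : ⟪m + (r + s⁻¹) • d, d + P⟫ ≤ 0) (hF : ⟪m + (r + s⁻¹) • e, e - Q⟫ ≤ 0)
    (hI : ⟪s • (m - X) + s • (m - Y) - (P - Q), m⟫ ≤ 0) :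
    energy ρ s (P + (ρ * (r + s⁻¹)) • d) (Q - (ρ * (r + s⁻¹)) • e) (m + s⁻¹ • d) (m + s⁻¹ • e)
      + damping r s ρ * ‖d‖ ^ 2 + damping r s ρ * ‖e‖ ^ 2
      + ρ * s * ‖m - X‖ ^ 2 + ρ * s * ‖m - Y‖ ^ 2
      ≤ energy ρ s P Q X Y := by
  unfold energy damping
  simp only [norm_add_sq_real, norm_sub_sq_real, norm_smul, Real.norm_eq_abs, mul_pow, sq_abs,
    inner_add_left, inner_sub_left, inner_add_right, inner_sub_right, real_inner_smul_right,
    real_inner_self_eq_norm_sq, real_inner_comm] at *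
  have hsu : s * s⁻¹ = 1 := mul_inv_cancel₀ hs
  linear_combination (2 * ρ) * (hG + hF + hI)
    + (2 * ρ * (⟪d, m⟫ + ⟪e, m⟫) + ρ * s⁻¹ * (‖d‖ ^ 2 + ‖e‖ ^ 2)) * hsu

end InnerProduct

section Algorithm

variable {V H : Type*} [NormedAddCommGroup H] [InnerProductSpace ℝ H]

structure SaddleOptimality (B : V → H) (F : H → ℝ) (G : V → ℝ) (I : H → ℝ) (φs : V) (qs μs : H) :
    Prop where
  G_le : ∀ φ', G φs ≤ G φ' + ⟪μs, B φ' - B φs⟫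
  F_le : ∀ q', F qs ≤ F q' + ⟪-μs, q' - qs⟫
  I_le : ∀ μ', I μs ≤ I μ' + ⟪qs - B φs, μ' - μs⟫

theorem SaddleOptimality.of_isSaddle {B : V → H} {F : H → ℝ} {G : V → ℝ} {I : H → ℝ}
    {L : V → H → H → ℝ} (hL : ∀ φ' q' μ', L φ' q' μ' = F q' + G φ' - I μ' + ⟪μ', B φ' - q'⟫)
    {φs : V} {qs μs : H}
    (hsaddle : ∀ φ' q' μ', L φs qs μ' ≤ L φs qs μs ∧ L φs qs μs ≤ L φ' q' μs) :
    SaddleOptimality B F G I φs qs μs where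
  G_le φ' := by
    have h := (hsaddle φ' qs μs).2
    simp only [hL, inner_sub_right] at h ⊢
    linarith
  F_le q' := by
    have h := (hsaddle φs q' μs).2
    simp only [hL, inner_sub_right, inner_neg_left] at h ⊢
    linarith
  I_le μ' := by
    have h := (hsaddle φs qs μ').1
    simp only [hL, inner_sub_left, inner_sub_right, real_inner_comm] at h ⊢
    linarith

structure IsAlgorithm1Iterates (B : V → H) (F : H → ℝ) (G : V → ℝ) (I : H → ℝ) (r s ρ : ℝ)
    (φ : ℕ → V) (q μ p b ν η : ℕ → H) : Prop where
  μ_step : ∀ n, 1 ≤ n → ∀ μ' : H,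
    I μ' - I (μ n) + ⟪μ n - μ', p n - b n⟫ - s * ⟪μ n - μ', μ n - ν (n-1)⟫
      - s * ⟪μ n - μ', μ n - η (n-1)⟫ ≥ 0
  ν_η_eq : ∀ n, 1 ≤ n → ν n = s⁻¹ • (B (φ n) - p n) + μ n ∧ η n = s⁻¹ • (b n - q n) + μ n
  φ_step : ∀ n, 1 ≤ n → ∀ φ' : V,
    G φ' - G (φ n) + ⟪ν n + r • (B (φ n) - p n), B φ' - B (φ n)⟫ ≥ 0
  q_step : ∀ n, 1 ≤ n → ∀ q' : H, F q' - F (q n) + ⟪η n + r • (b n - q n), q n - q'⟫ ≥ 0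
  pb_step : ∀ n, 1 ≤ n →
    p (n+1) = p n + (ρ * (r + 1/s)) • (B (φ n) - p n) ∧
    b (n+1) = b n - (ρ * (r + 1/s)) • (b n - q n)

namespace IsAlgorithm1Iterates

variable {B : V → H} {F : H → ℝ} {G : V → ℝ} {I : H → ℝ} {r s ρ : ℝ} {φ : ℕ → V}
  {q μ p b ν η : ℕ → H} {φs : V} {qs μs : H} {n : ℕ}

theorem inner_G_nonpos (h : IsAlgorithm1Iterates B F G I r s ρ φ q μ p b ν η)
    (hS : SaddleOptimality B F G I φs qs μs) (hn : 1 ≤ n) :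
    ⟪(μ n - μs) + (r + s⁻¹) • (B (φ n) - p n), (B (φ n) - p n) + (p n - B φs)⟫ ≤ 0 := by
  have key := inner_sub_sub_nonpos_of_forall_le (x := φ n) (u := ν n + r • (B (φ n) - p n))
    (fun φ' => by linarith [h.φ_step n hn φ']) hS.G_le
  convert key using 2
  · rw [(h.ν_η_eq n hn).1]
    module
  · abel

theorem inner_F_nonpos (h : IsAlgorithm1Iterates B F G I r s ρ φ q μ p b ν η)
    (hS : SaddleOptimality B F G I φs qs μs) (hn : 1 ≤ n) :
    ⟪(μ n - μs) + (r + s⁻¹) • (b n - q n), (b n - q n) - (b n - qs)⟫ ≤ 0 := by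
  have key := inner_sub_sub_nonpos_of_forall_le (x := q n) (u := -(η n + r • (b n - q n)))
    (fun q' => by
      rw [inner_neg_left, ← neg_sub (q n) q', inner_neg_right, neg_neg]
      linarith [h.q_step n hn q']) hS.F_le
  rw [← inner_neg_neg]
  convert key using 2
  · rw [(h.ν_η_eq n hn).2]
    module
  · abel

theorem inner_I_nonpos (h : IsAlgorithm1Iterates B F G I r s ρ φ q μ p b ν η)
    (hS : SaddleOptimality B F G I φs qs μs) (hn : 1 ≤ n) :
    ⟪s • ((μ n - μs) - (ν (n - 1) - μs)) + s • ((μ n - μs) - (η (n - 1) - μs))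
      - ((p n - B φs) - (b n - qs)), μ n - μs⟫ ≤ 0 := by
  have key := inner_sub_sub_nonpos_of_forall_le (x := μ n)
    (u := s • (μ n - ν (n - 1)) + s • (μ n - η (n - 1)) - (p n - b n))
    (fun μ' => by
      have hμ := h.μ_step n hn μ'
      rw [← neg_sub (μ n) μ']
      simp only [inner_neg_right, inner_add_left, inner_sub_left, inner_sub_right,
        real_inner_smul_right, real_inner_comm] at hμ ⊢
      linarith) hS.I_le
  convert key using 2
  module

theorem energy_succ_add_le (h : IsAlgorithm1Iterates B F G I r s ρ φ q μ p b ν η)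
    (hS : SaddleOptimality B F G I φs qs μs) (hs : 0 < s) (hρ : 0 ≤ ρ) (hn : 1 ≤ n) :
    energy ρ s (p (n + 1) - B φs) (b (n + 1) - qs) (ν n - μs) (η n - μs)
      + damping r s ρ * ‖B (φ n) - p n‖ ^ 2 + damping r s ρ * ‖b n - q n‖ ^ 2
      + ρ * s * ‖μ n - ν (n - 1)‖ ^ 2 + ρ * s * ‖μ n - η (n - 1)‖ ^ 2
      ≤ energy ρ s (p n - B φs) (b n - qs) (ν (n - 1) - μs) (η (n - 1) - μs) := by
  have key := energy_step hs.ne' hρ (h.inner_G_nonpos hS hn) (h.inner_F_nonpos hS hn)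
    (h.inner_I_nonpos hS hn)
  obtain ⟨hν, hη⟩ := h.ν_η_eq n hn
  obtain ⟨hp, hb⟩ := h.pb_step n hn
  simp only [sub_sub_sub_cancel_right] at key
  have e1 : p (n + 1) - B φs = (p n - B φs) + (ρ * (r + s⁻¹)) • (B (φ n) - p n) := by
    rw [hp, one_div]; abel
  have e2 : b (n + 1) - qs = (b n - qs) - (ρ * (r + s⁻¹)) • (b n - q n) := by
    rw [hb, one_div]; abel
  have e3 : ν n - μs = (μ n - μs) + s⁻¹ • (B (φ n) - p n) := by rw [hν]; abel
  have e4 : η n - μs = (μ n - μs) + s⁻¹ • (b n - q n) := by rw [hη]; abel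
  rwa [e1, e2, e3, e4]

theorem energy_le_energy_one (h : IsAlgorithm1Iterates B F G I r s ρ φ q μ p b ν η)
    (hS : SaddleOptimality B F G I φs qs μs) (hs : 0 < s) (hρ : 0 < ρ) (hc : 0 < damping r s ρ)
    (hn : 1 ≤ n) :
    energy ρ s (p n - B φs) (b n - qs) (ν (n - 1) - μs) (η (n - 1) - μs)
      ≤ energy ρ s (p 1 - B φs) (b 1 - qs) (ν 0 - μs) (η 0 - μs) := by
  refine antitoneOn_nat_Ici_of_succ_le
    (f := fun n => energy ρ s (p n - B φs) (b n - qs) (ν (n - 1) - μs) (η (n - 1) - μs))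
    (fun k hk => ?_) (Set.mem_Ici.mpr le_rfl) (Set.mem_Ici.mpr hn) hn
  have hstep := h.energy_succ_add_le hS hs hρ.le hk
  have hρs : 0 < ρ * s := mul_pos hρ hs
  have : 0 ≤ damping r s ρ * ‖B (φ k) - p k‖ ^ 2 + damping r s ρ * ‖b k - q k‖ ^ 2
      + ρ * s * ‖μ k - ν (k - 1)‖ ^ 2 + ρ * s * ‖μ k - η (k - 1)‖ ^ 2 := by positivity
  simp only [add_tsub_cancel_right]
  linarith

theorem residuals_tendsto_zero (h : IsAlgorithm1Iterates B F G I r s ρ φ q μ p b ν η)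
    (hS : SaddleOptimality B F G I φs qs μs) (hs : 0 < s) (hρ : 0 < ρ) (hc : 0 < damping r s ρ) :
    Tendsto (fun n => B (φ n) - p n) atTop (𝓝 0) ∧ Tendsto (fun n => b n - q n) atTop (𝓝 0) ∧
      Tendsto (fun n => μ n - ν (n - 1)) atTop (𝓝 0) ∧
      Tendsto (fun n => μ n - η (n - 1)) atTop (𝓝 0) := by
  have hρs : 0 < ρ * s := mul_pos hρ hs
  have h0 : ∀ n, 0 ≤ damping r s ρ * ‖B (φ n) - p n‖ ^ 2 ∧ 0 ≤ damping r s ρ * ‖b n - q n‖ ^ 2 ∧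
      0 ≤ ρ * s * ‖μ n - ν (n - 1)‖ ^ 2 ∧ 0 ≤ ρ * s * ‖μ n - η (n - 1)‖ ^ 2 := fun n =>
    ⟨by positivity, by positivity, by positivity, by positivity⟩
  have hD := tendsto_zero_of_add_le (N := 1)
    (E := fun n => energy ρ s (p n - B φs) (b n - qs) (ν (n - 1) - μs) (η (n - 1) - μs))
    (a := fun n => damping r s ρ * ‖B (φ n) - p n‖ ^ 2 + damping r s ρ * ‖b n - q n‖ ^ 2
      + ρ * s * ‖μ n - ν (n - 1)‖ ^ 2 + ρ * s * ‖μ n - η (n - 1)‖ ^ 2)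
    (fun n => energy_nonneg hρs.le _ _ _ _)
    (fun n => by positivity)
    (fun n hn => by
      simpa only [add_assoc, add_tsub_cancel_right] using h.energy_succ_add_le hS hs hρ.le hn)
  refine ⟨tendsto_zero_of_mul_norm_sq_le hc (fun n => ?_) hD,
    tendsto_zero_of_mul_norm_sq_le hc (fun n => ?_) hD,
    tendsto_zero_of_mul_norm_sq_le hρs (fun n => ?_) hD,
    tendsto_zero_of_mul_norm_sq_le hρs (fun n => ?_) hD⟩ <;>
  · obtain ⟨h1, h2, h3, h4⟩ := h0 n
    linarith

theorem isBigO_one (h : IsAlgorithm1Iterates B F G I r s ρ φ q μ p b ν η)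
    (hS : SaddleOptimality B F G I φs qs μs) (hs : 0 < s) (hρ : 0 < ρ) (hc : 0 < damping r s ρ)
    (hd : Tendsto (fun n => B (φ n) - p n) atTop (𝓝 0)) :
    (fun n => μ n - μs) =O[atTop] (fun _ => (1 : ℝ)) ∧
      (fun n => p n - B φs) =O[atTop] (fun _ => (1 : ℝ)) ∧
      (fun n => b n - qs) =O[atTop] (fun _ => (1 : ℝ)) := by
  have hρs : 0 < ρ * s := mul_pos hρ hs
  obtain ⟨E₁, hE⟩ : ∃ E₁, ∀ n ≥ 1,
      ‖p n - B φs‖ ^ 2 + ‖b n - qs‖ ^ 2 + ρ * s * ‖ν (n - 1) - μs‖ ^ 2 ≤ E₁ :=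
    ⟨_, fun n hn => le_trans (by
      unfold energy
      have : 0 ≤ ρ * s * ‖η (n - 1) - μs‖ ^ 2 := by positivity
      linarith) (h.energy_le_energy_one hS hs hρ hc hn)⟩
  have hν : (fun n => ν n - μs) =O[atTop] (fun _ => (1 : ℝ)) :=
    isBigO_one_of_mul_norm_sq_le hρs <| Eventually.of_forall fun n => by
      have := hE (n + 1) (Nat.le_add_left 1 n)
      simp only [add_tsub_cancel_right] at this
      nlinarith [sq_nonneg ‖p (n + 1) - B φs‖, sq_nonneg ‖b (n + 1) - qs‖]
  refine ⟨?_, isBigO_one_of_mul_norm_sq_le (C := E₁) one_pos ?_,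
    isBigO_one_of_mul_norm_sq_le (C := E₁) one_pos ?_⟩
  · refine (hν.sub ((hd.isBigO_one ℝ).const_smul_left s⁻¹)).congr' ?_ EventuallyEq.rfl
    filter_upwards [eventually_ge_atTop 1] with n hn
    rw [(h.ν_η_eq n hn).1, Pi.smul_apply]
    abel
  all_goals
    filter_upwards [eventually_ge_atTop 1] with n hn
    nlinarith [hE n hn, sq_nonneg ‖p n - B φs‖, sq_nonneg ‖b n - qs‖, sq_nonneg ‖ν (n - 1) - μs‖]

theorem dual_gap_le (h : IsAlgorithm1Iterates B F G I r s ρ φ q μ p b ν η)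
    (hS : SaddleOptimality B F G I φs qs μs) (hn : 1 ≤ n) :
    I (μ n) - I μs - ⟪μ n - μs, B φs - qs⟫ ≤
      -(⟪(B (φ n) - p n) + (b n - q n), μ n - μs⟫
        + (r + s⁻¹) * ⟪B (φ n) - p n, (B (φ n) - p n) + (p n - B φs)⟫
        + (r + s⁻¹) * ⟪b n - q n, (b n - q n) - (b n - qs)⟫
        + s * ⟪μ n - ν (n - 1), μ n - μs⟫ + s * ⟪μ n - η (n - 1), μ n - μs⟫) := by
  have hμ := h.μ_step n hn μs
  have hG := h.inner_G_nonpos hS hn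
  have hF := h.inner_F_nonpos hS hn
  simp only [inner_add_left, inner_add_right, inner_sub_left, inner_sub_right,
    real_inner_smul_right, real_inner_comm] at hμ hG hF ⊢
  linarith

theorem tendsto_dual_gap (h : IsAlgorithm1Iterates B F G I r s ρ φ q μ p b ν η)
    (hS : SaddleOptimality B F G I φs qs μs)
    (hd : Tendsto (fun n => B (φ n) - p n) atTop (𝓝 0))
    (he : Tendsto (fun n => b n - q n) atTop (𝓝 0))
    (hX : Tendsto (fun n => μ n - ν (n - 1)) atTop (𝓝 0))
    (hY : Tendsto (fun n => μ n - η (n - 1)) atTop (𝓝 0))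
    (hm : (fun n => μ n - μs) =O[atTop] (fun _ => (1 : ℝ)))
    (hP : (fun n => p n - B φs) =O[atTop] (fun _ => (1 : ℝ)))
    (hQ : (fun n => b n - qs) =O[atTop] (fun _ => (1 : ℝ))) :
    Tendsto (fun n => I (μ n) - I μs - ⟪μ n - μs, B φs - qs⟫) atTop (𝓝 0) := by
  have hbound : Tendsto (fun n => -(⟪(B (φ n) - p n) + (b n - q n), μ n - μs⟫
        + (r + s⁻¹) * ⟪B (φ n) - p n, (B (φ n) - p n) + (p n - B φs)⟫
        + (r + s⁻¹) * ⟪b n - q n, (b n - q n) - (b n - qs)⟫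
        + s * ⟪μ n - ν (n - 1), μ n - μs⟫ + s * ⟪μ n - η (n - 1), μ n - μs⟫)) atTop (𝓝 0) := by
    simpa using ((((tendsto_inner_zero_of_isBigO_one (by simpa using hd.add he) hm).add
      ((tendsto_inner_zero_of_isBigO_one hd ((hd.isBigO_one ℝ).add hP)).const_mul _)).add
      ((tendsto_inner_zero_of_isBigO_one he ((he.isBigO_one ℝ).sub hQ)).const_mul _)).add
      ((tendsto_inner_zero_of_isBigO_one hX hm).const_mul _)).add
      ((tendsto_inner_zero_of_isBigO_one hY hm).const_mul _) |>.neg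
  refine tendsto_of_tendsto_of_tendsto_of_le_of_le' tendsto_const_nhds hbound
    (Eventually.of_forall fun n => ?_)
    ((eventually_ge_atTop 1).mono fun n hn => h.dual_gap_le hS hn)
  have := hS.I_le (μ n)
  rw [← neg_sub (B φs) qs, inner_neg_left, real_inner_comm] at this
  linarith

theorem tendsto_p_succ_sub (h : IsAlgorithm1Iterates B F G I r s ρ φ q μ p b ν η)
    (hd : Tendsto (fun n => B (φ n) - p n) atTop (𝓝 0)) :
    Tendsto (fun n => p (n + 1) - p n) atTop (𝓝 0) := by
  refine (by simpa using hd.const_smul (ρ * (r + 1 / s)) :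
    Tendsto (fun n => (ρ * (r + 1 / s)) • (B (φ n) - p n)) atTop (𝓝 0)).congr' ?_
  filter_upwards [eventually_ge_atTop 1] with n hn
  rw [(h.pb_step n hn).1]
  abel

theorem tendsto_q_succ_sub (h : IsAlgorithm1Iterates B F G I r s ρ φ q μ p b ν η)
    (he : Tendsto (fun n => b n - q n) atTop (𝓝 0)) :
    Tendsto (fun n => q (n + 1) - q n) atTop (𝓝 0) := by
  have he' := (he.const_smul (1 - ρ * (r + 1 / s))).sub (he.comp (tendsto_add_atTop_nat 1))
  simp only [smul_zero, sub_zero, Function.comp_def] at he'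
  refine he'.congr' ?_
  filter_upwards [eventually_ge_atTop 1] with n hn
  rw [(h.pb_step n hn).2]
  module

end IsAlgorithm1Iterates

end Algorithm

theorem algorithm1_residuals_tendsto_zero_general
    {V H : Type*} [NormedAddCommGroup V] [InnerProductSpace ℝ V]
    [NormedAddCommGroup H] [InnerProductSpace ℝ H]
    (B : V →L[ℝ] H) (F : H → ℝ) (G : V → ℝ) (I : H → ℝ)
    (L : V → H → H → ℝ)
    (hL : ∀ (φ' : V) (q' μ' : H), L φ' q' μ' = F q' + G φ' - I μ' + ⟪μ', B φ' - q'⟫)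
    (r s ρ : ℝ) (hr : 0 < r) (hs : 0 < s)
    (hρ1 : 0 < ρ) (hρ2 : ρ < (2*r*s^2 + s) / (1 + r*s)^2)
    (φs : V) (qs μs : H) (ps bs : H) (hps : ps = B φs) (hbs : bs = qs)
    (hsaddle : ∀ (φ' : V) (q' μ' : H), L φs qs μ' ≤ L φs qs μs ∧ L φs qs μs ≤ L φ' q' μs)
    (φ : ℕ → V) (q μ p b ν η : ℕ → H)
    (hi : ∀ n, 1 ≤ n → ∀ μ' : H,
      I μ' - I (μ n) + ⟪μ n - μ', p n - b n⟫ - s * ⟪μ n - μ', μ n - ν (n-1)⟫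
        - s * ⟪μ n - μ', μ n - η (n-1)⟫ ≥ 0)
    (hii : ∀ n, 1 ≤ n →
      ν n = s⁻¹ • (B (φ n) - p n) + μ n ∧ η n = s⁻¹ • (b n - q n) + μ n)
    (hiii : ∀ n, 1 ≤ n → ∀ φ' : V,
      G φ' - G (φ n) + ⟪ν n + r • (B (φ n) - p n), B φ' - B (φ n)⟫ ≥ 0)
    (hiv : ∀ n, 1 ≤ n → ∀ q' : H,
      F q' - F (q n) + ⟪η n + r • (b n - q n), q n - q'⟫ ≥ 0)
    (hv : ∀ n, 1 ≤ n →
      p (n+1) = p n + (ρ * (r + 1/s)) • (B (φ n) - p n) ∧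
      b (n+1) = b n - (ρ * (r + 1/s)) • (b n - q n))
    :
    Tendsto (fun n => ‖B (φ n) - p n‖) atTop (nhds 0) ∧
    Tendsto (fun n => ‖b n - q n‖) atTop (nhds 0) ∧
    Tendsto (fun n => ‖μ n - ν n‖) atTop (nhds 0) ∧
    Tendsto (fun n => ‖μ n - η n‖) atTop (nhds 0) ∧
    Tendsto (fun n => ‖ν n - ν (n-1)‖) atTop (nhds 0) ∧
    Tendsto (fun n => ‖η n - η (n-1)‖) atTop (nhds 0) ∧
    Tendsto (fun n => ‖p (n+1) - p n‖) atTop (nhds 0) ∧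
    Tendsto (fun n => ‖q (n+1) - q n‖) atTop (nhds 0) ∧
    Tendsto (fun n => I (μ n) - I μs - ⟪μ n - μs, ps - bs⟫) atTop (nhds 0) := by
  subst hps hbs
  have h : IsAlgorithm1Iterates B F G I r s ρ φ q μ p b ν η := ⟨hi, hii, hiii, hiv, hv⟩
  have hS := SaddleOptimality.of_isSaddle hL hsaddle
  have hc := damping_pos hr hs hρ1 hρ2
  obtain ⟨hd, he, hX, hY⟩ := h.residuals_tendsto_zero hS hs hρ1 hc
  obtain ⟨hm, hP, hQ⟩ := h.isBigO_one hS hs hρ1 hc hd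
  have hν n (hn : n ≥ 1) := (h.ν_η_eq n hn).1
  have hη n (hn : n ≥ 1) := (h.ν_η_eq n hn).2
  simp only [← tendsto_zero_iff_norm_tendsto_zero]
  exact ⟨hd, he, tendsto_sub_of_eq_smul_add hν hd, tendsto_sub_of_eq_smul_add hη he,
    tendsto_sub_pred_of_eq_smul_add hν hd hX, tendsto_sub_pred_of_eq_smul_add hη he hY,
    h.tendsto_p_succ_sub hd, h.tendsto_q_succ_sub he,
    h.tendsto_dual_gap hS hd he hX hY hm hP hQ⟩

/-- For Algorithm-1 iterates, the residuals
‖Bφⁿ − pⁿ‖, ‖bⁿ − qⁿ‖, ‖μⁿ − νⁿ‖, ‖μⁿ − ηⁿ‖, ‖νⁿ − νⁿ⁻¹‖, ‖ηⁿ − ηⁿ⁻¹‖,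
‖pⁿ⁺¹ − pⁿ‖, ‖qⁿ⁺¹ − qⁿ‖ and I(μⁿ) − I(μ*) − ⟨μⁿ − μ*, p* − b*⟩ all tend to 0. -/
theorem algorithm1_residuals_tendsto_zero
    {V H : Type*} [NormedAddCommGroup V] [InnerProductSpace ℝ V] [CompleteSpace V]
    [NormedAddCommGroup H] [InnerProductSpace ℝ H] [CompleteSpace H]
    (B : V →L[ℝ] H) (F : H → ℝ) (G : V → ℝ) (I : H → ℝ)
    (hFconv : ConvexOn ℝ Set.univ F) (hFlsc : LowerSemicontinuous F)
    (hGconv : ConvexOn ℝ Set.univ G) (hGlsc : LowerSemicontinuous G)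
    (hIconv : ConvexOn ℝ Set.univ I) (hIlsc : LowerSemicontinuous I)
    (L : V → H → H → ℝ)
    (hL : ∀ (φ' : V) (q' μ' : H), L φ' q' μ' = F q' + G φ' - I μ' + ⟪μ', B φ' - q'⟫)
    (r s ρ : ℝ) (hr : 0 < r) (hs : 0 < s)
    (hρ1 : 0 < ρ) (hρ2 : ρ < (2*r*s^2 + s) / (1 + r*s)^2)
    (φs : V) (qs μs : H) (ps bs : H) (hps : ps = B φs) (hbs : bs = qs)
    (hsaddle : ∀ (φ' : V) (q' μ' : H), L φs qs μ' ≤ L φs qs μs ∧ L φs qs μs ≤ L φ' q' μs)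
    (φ : ℕ → V) (q μ p b ν η : ℕ → H)
    (hi : ∀ n, 1 ≤ n → ∀ μ' : H,
      I μ' - I (μ n) + ⟪μ n - μ', p n - b n⟫ - s * ⟪μ n - μ', μ n - ν (n-1)⟫
        - s * ⟪μ n - μ', μ n - η (n-1)⟫ ≥ 0)
    (hii : ∀ n, 1 ≤ n →
      ν n = s⁻¹ • (B (φ n) - p n) + μ n ∧ η n = s⁻¹ • (b n - q n) + μ n)
    (hiii : ∀ n, 1 ≤ n → ∀ φ' : V,
      G φ' - G (φ n) + ⟪ν n + r • (B (φ n) - p n), B φ' - B (φ n)⟫ ≥ 0)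
    (hiv : ∀ n, 1 ≤ n → ∀ q' : H,
      F q' - F (q n) + ⟪η n + r • (b n - q n), q n - q'⟫ ≥ 0)
    (hv : ∀ n, 1 ≤ n →
      p (n+1) = p n + (ρ * (r + 1/s)) • (B (φ n) - p n) ∧
      b (n+1) = b n - (ρ * (r + 1/s)) • (b n - q n))
    :
    Tendsto (fun n => ‖B (φ n) - p n‖) atTop (nhds 0) ∧
    Tendsto (fun n => ‖b n - q n‖) atTop (nhds 0) ∧
    Tendsto (fun n => ‖μ n - ν n‖) atTop (nhds 0) ∧
    Tendsto (fun n => ‖μ n - η n‖) atTop (nhds 0) ∧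
    Tendsto (fun n => ‖ν n - ν (n-1)‖) atTop (nhds 0) ∧
    Tendsto (fun n => ‖η n - η (n-1)‖) atTop (nhds 0) ∧
    Tendsto (fun n => ‖p (n+1) - p n‖) atTop (nhds 0) ∧
    Tendsto (fun n => ‖q (n+1) - q n‖) atTop (nhds 0) ∧
    Tendsto (fun n => I (μ n) - I μs - ⟪μ n - μs, ps - bs⟫) atTop (nhds 0) :=
  algorithm1_residuals_tendsto_zero_general B F G I L hL r s ρ hr hs hρ1 hρ2 φs qs μs ps bs hps hbs
    hsaddle φ q μ p b ν η hi hii hiii hiv hv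
end

section
/- For Algorithm-1 iterates with a saddle point (φ*, q*, μ*) of L, p* = Bφ*, b* = q*, and step size 0 < ρ < (2rs² + s)/(1 + rs)², the Lagrangian values converge: lim_{n→∞} [F(qⁿ) + G(φⁿ) − I(μⁿ) + ⟨μⁿ, pⁿ − bⁿ⟩] = F(q*) + G(φ*) − I(μ*) + ⟨μ*, Bφ* − q*⟩. -/
open RealInnerProductSpace Filter Topology

private lemma aux_y2 {H : Type*} [NormedAddCommGroup H] [InnerProductSpace ℝ H] (u w : H) :
    ‖u + w‖^2 ≤ 2*(‖u‖^2 + ‖w‖^2) := by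
  have h := norm_add_le u w
  nlinarith [sq_nonneg (‖u‖ - ‖w‖), norm_nonneg u, norm_nonneg w, norm_nonneg (u+w)]

private lemma aux_young {H : Type*} [NormedAddCommGroup H] [InnerProductSpace ℝ H]
    (E : ℝ) (hE : 0 < E) (x u w : H) :
    ⟪x, u + w⟫ ≤ E*‖x‖^2 + (1/(2*E))*(‖u‖^2 + ‖w‖^2) := by
  have cs : ⟪x, u+w⟫ ≤ ‖x‖*‖u+w‖ := real_inner_le_norm _ _
  have hy2 : ‖u+w‖^2 ≤ 2*(‖u‖^2+‖w‖^2) := aux_y2 u w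
  have key : 4*E*⟪x,u+w⟫ ≤ 4*E^2*‖x‖^2 + ‖u+w‖^2 := by
    nlinarith [sq_nonneg (2*E*‖x‖ - ‖u+w‖),
      mul_le_mul_of_nonneg_left cs (by positivity : (0:ℝ) ≤ 4*E)]
  have h4E : (0:ℝ) < 4*E := by linarith
  rw [show E*‖x‖^2 + (1/(2*E))*(‖u‖^2+‖w‖^2) = (4*E^2*‖x‖^2 + 2*(‖u‖^2+‖w‖^2))/(4*E) by
    field_simp; ring, le_div_iff₀ h4E]
  nlinarith [key, hy2]

private lemma aux_ip_nonneg (s k x y U ip : ℝ) (hs : 0 < s) (hk : 1 ≤ 2*s*k)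
    (hU : 0 ≤ U) (hy2 : y^2 ≤ 2*U) (hip : -(x*y) ≤ ip) : 0 ≤ s*x^2 + ip + k*U := by
  nlinarith [sq_nonneg (2*s*x - y), mul_le_mul_of_nonneg_left hk hU,
    mul_le_mul_of_nonneg_left hip (by linarith : (0:ℝ) ≤ 2*s), hs]

private lemma aux_ip_lb (s k x y U ip : ℝ) (hs : 0 < s) (hk : 1 ≤ 2*s*k)
    (hU : 0 ≤ U) (hy2 : y^2 ≤ 2*U) (hip : -(x*y) ≤ ip) :
    (s/2)*x^2 - k*U ≤ s*x^2 + ip + k*U := by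
  nlinarith [sq_nonneg (s*x - y), mul_le_mul_of_nonneg_left hk hU,
    mul_le_mul_of_nonneg_left hip (by linarith : (0:ℝ) ≤ 2*s), hs]

private lemma aux_s {H : Type*} [NormedAddCommGroup H] [InnerProductSpace ℝ H]
    (s : ℝ) (hs : s ≠ 0) (x v m y : H) :
    s * ⟪x, y - (s⁻¹ • v + m)⟫ = s * ⟪x, y - m⟫ - ⟪x, v⟫ := by
  simp only [inner_sub_right, inner_add_right, real_inner_smul_right]
  field_simp
  ring

set_option maxHeartbeats 2000000 in
theorem algorithm1_lagrangian_values_converge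
    {V H : Type*} [NormedAddCommGroup V] [InnerProductSpace ℝ V] [CompleteSpace V]
    [NormedAddCommGroup H] [InnerProductSpace ℝ H] [CompleteSpace H]
    (B : V →L[ℝ] H) (F : H → ℝ) (G : V → ℝ) (I : H → ℝ)
    (hFconv : ConvexOn ℝ Set.univ F) (hFlsc : LowerSemicontinuous F)
    (hGconv : ConvexOn ℝ Set.univ G) (hGlsc : LowerSemicontinuous G)
    (hIconv : ConvexOn ℝ Set.univ I) (hIlsc : LowerSemicontinuous I)
    (L : V → H → H → ℝ)
    (hL : ∀ (φ' : V) (q' μ' : H), L φ' q' μ' = F q' + G φ' - I μ' + ⟪μ', B φ' - q'⟫)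
    (r s ρ : ℝ) (hr : 0 < r) (hs : 0 < s)
    (hρ1 : 0 < ρ) (hρ2 : ρ < (2*r*s^2 + s) / (1 + r*s)^2)
    (φs : V) (qs μs : H) (ps bs : H) (hps : ps = B φs) (hbs : bs = qs)
    (hsaddle : ∀ (φ' : V) (q' μ' : H), L φs qs μ' ≤ L φs qs μs ∧ L φs qs μs ≤ L φ' q' μs)
    (φ : ℕ → V) (q μ p b ν η : ℕ → H)
    (hi : ∀ n, 1 ≤ n → ∀ μ' : H,
      I μ' - I (μ n) + ⟪μ n - μ', p n - b n⟫ - s * ⟪μ n - μ', μ n - ν (n-1)⟫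
        - s * ⟪μ n - μ', μ n - η (n-1)⟫ ≥ 0)
    (hii : ∀ n, 1 ≤ n →
      ν n = s⁻¹ • (B (φ n) - p n) + μ n ∧ η n = s⁻¹ • (b n - q n) + μ n)
    (hiii : ∀ n, 1 ≤ n → ∀ φ' : V,
      G φ' - G (φ n) + ⟪ν n + r • (B (φ n) - p n), B φ' - B (φ n)⟫ ≥ 0)
    (hiv : ∀ n, 1 ≤ n → ∀ q' : H,
      F q' - F (q n) + ⟪η n + r • (b n - q n), q n - q'⟫ ≥ 0)
    (hv : ∀ n, 1 ≤ n →
      p (n+1) = p n + (ρ * (r + 1/s)) • (B (φ n) - p n) ∧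
      b (n+1) = b n - (ρ * (r + 1/s)) • (b n - q n))
    :
    Tendsto (fun n => F (q n) + G (φ n) - I (μ n) + ⟪μ n, p n - b n⟫) atTop
      (nhds (F qs + G φs - I μs + ⟪μs, B φs - qs⟫)) := by
  subst hps hbs
  have hsne : s ≠ 0 := ne_of_gt hs
  set τ : ℝ := ρ * (r + 1/s) with hτdef
  have hτpos : 0 < τ := by
    have : 0 < r + 1/s := by positivity
    exact mul_pos hρ1 this
  clear_value τ
  set θ : ℝ := (s⁻¹ + r) * (1 - τ/2) - 1/(2*s) with hθdef
  have hkey : ρ * (1 + r*s)^2 < 2*r*s^2 + s :=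
    (lt_div_iff₀ (by positivity)).mp hρ2
  have hθ2s : θ * (2*s^2) = s + 2*r*s^2 - ρ*(1+r*s)^2 := by
    rw [hθdef, hτdef]; field_simp; ring
  have hθpos : 0 < θ := by nlinarith [hθ2s, hkey, sq_nonneg s, mul_pos hs hs]
  clear_value θ
  have h1sθ : 0 < 1 + s*θ := by positivity
  set E : ℝ := s/(1 + s*θ) with hEdef
  have hEpos : 0 < E := by rw [hEdef]; positivity
  have hEs : E < s := by
    rw [hEdef, div_lt_iff₀ h1sθ]; nlinarith [mul_pos hs hθpos]
  have hE2 : 1/(2*E) = 1/(2*s) + θ/2 := by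
    rw [hEdef]; field_simp
  have hk2 : 1 ≤ 2*s*(1/(2*E)) := by
    rw [hE2]
    have h : 2*s*(1/(2*s) + θ/2) = 1 + s*θ := by field_simp
    rw [h]; nlinarith [mul_pos hs hθpos]
  have hθh : (s⁻¹ + r) * (1 - τ/2) - 1/(2*E) = θ/2 := by
    rw [hE2, hθdef]; ring
  have hθhpos : 0 < (s⁻¹ + r) * (1 - τ/2) - 1/(2*E) := by rw [hθh]; exact half_pos hθpos
  clear_value E
  set δ : ℝ := min (2*τ*(s-E)) (2*τ*((s⁻¹ + r) * (1 - τ/2) - 1/(2*E))) with hδdef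
  have hδpos : 0 < δ := by
    rw [hδdef]
    exact lt_min (mul_pos (by positivity) (by linarith)) (mul_pos (by positivity) hθhpos)
  have hδ1 : δ ≤ 2*τ*(s-E) := by rw [hδdef]; exact min_le_left _ _
  have hδ2 : δ ≤ 2*τ*((s⁻¹ + r) * (1 - τ/2) - 1/(2*E)) := by rw [hδdef]; exact min_le_right _ _
  clear_value δ
  -- saddle point inequalities in raw form
  have hsadA : ∀ z : H, F bs + G φs - I z + ⟪z, B φs - bs⟫ ≤
      F bs + G φs - I μs + ⟪μs, B φs - bs⟫ := by
    intro z; have h := (hsaddle φs bs z).1; rwa [hL, hL] at h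
  have hsadB : ∀ (x : V) (y : H), F bs + G φs - I μs + ⟪μs, B φs - bs⟫ ≤
      F y + G x - I μs + ⟪μs, B x - y⟫ := by
    intro x y; have h := (hsaddle x y μs).2; rwa [hL, hL] at h
  have hGstar : ∀ x : V, G φs - G x + ⟪μs, B φs⟫ - ⟪μs, B x⟫ ≤ 0 := by
    intro x
    have h := hsadB x bs
    simp only [inner_sub_right] at h
    linarith
  have hFstar : ∀ y : H, F bs - F y - ⟪μs, bs⟫ + ⟪μs, y⟫ ≤ 0 := by
    intro y
    have h := hsadB φs y
    simp only [inner_sub_right] at h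
    linarith
  have hIstar : ∀ z : H, 0 ≤ I z - I μs + ⟪μs, B φs - bs⟫ - ⟪z, B φs - bs⟫ := by
    intro z; have h := hsadA z; linarith
  -- algorithm inequalities, cleaned
  have hiii2 : ∀ n, 1 ≤ n → ∀ x : V, G x - G (φ n)
      + ⟪μ n + (s⁻¹ + r) • (B (φ n) - p n), B x - B (φ n)⟫ ≥ 0 := by
    intro n hn x
    have hrw : ν n + r • (B (φ n) - p n) = μ n + (s⁻¹ + r) • (B (φ n) - p n) := by
      rw [(hii n hn).1]; module
    have h := hiii n hn x; rwa [hrw] at h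
  have hiv2 : ∀ n, 1 ≤ n → ∀ y : H, F y - F (q n)
      + ⟪μ n + (s⁻¹ + r) • (b n - q n), q n - y⟫ ≥ 0 := by
    intro n hn y
    have hrw : η n + r • (b n - q n) = μ n + (s⁻¹ + r) • (b n - q n) := by
      rw [(hii n hn).2]; module
    have h := hiv n hn y; rwa [hrw] at h
  have hi2 : ∀ n, 2 ≤ n → ∀ z : H, I z - I (μ n) + ⟪μ n - z, p n - b n⟫
      - 2*s*⟪μ n - z, μ n - μ (n-1)⟫
      + ⟪μ n - z, B (φ (n-1)) - p (n-1)⟫ + ⟪μ n - z, b (n-1) - q (n-1)⟫ ≥ 0 := by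
    intro n hn z
    have h := hi n (by omega) z
    rw [(hii (n-1) (by omega)).1, (hii (n-1) (by omega)).2,
      aux_s s hsne, aux_s s hsne] at h
    linarith
  -- energy and descent
  set U : ℕ → ℝ := fun n => ‖B (φ n) - p n‖^2 + ‖b n - q n‖^2 with hUdef
  set a : ℕ → ℝ := fun n => 2*τ*(s*‖μ n - μs‖^2 + ⟪μ n - μs, (B (φ n) - p n) + (b n - q n)⟫
      + (1/(2*E))*U n) + (s⁻¹+r)*(‖p (n+1) - B φs‖^2 + ‖b (n+1) - bs‖^2) with hadef
  clear_value U a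
  have h2τ : (0:ℝ) ≤ 2*τ := by linarith
  have hdesc : ∀ n, 2 ≤ n → a n + 2*τ*((s - E)*‖μ n - μ (n-1)‖^2
      + ((s⁻¹+r)*(1 - τ/2) - 1/(2*E))*U n) ≤ a (n-1) := by
    intro n hn
    have hn1 : 1 ≤ n := by omega
    have hm1 : 1 ≤ n - 1 := by omega
    have hsub : n - 1 + 1 = n := by omega
    obtain ⟨hv1, hv2⟩ := hv n hn1
    have f1 := mul_le_mul_of_nonneg_left (hiii2 n hn1 φs) h2τ
    have f2 := mul_le_mul_of_nonneg_left (hGstar (φ n)) h2τ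
    have f3 := mul_le_mul_of_nonneg_left (hiv2 n hn1 bs) h2τ
    have f4 := mul_le_mul_of_nonneg_left (hFstar (q n)) h2τ
    have f5 := mul_le_mul_of_nonneg_left (hi2 n hn μs) h2τ
    have f6 := mul_le_mul_of_nonneg_left (hIstar (μ n)) h2τ
    have f7 := mul_le_mul_of_nonneg_left
      (aux_young E hEpos (μ n - μ (n-1)) (B (φ (n-1)) - p (n-1)) (b (n-1) - q (n-1))) h2τ
    simp only [hadef, hUdef, hsub, hv1, hv2]
    simp only [mul_zero, ge_iff_le, inner_add_left, inner_add_right, inner_sub_left,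
      inner_sub_right, real_inner_smul_left, real_inner_smul_right,
      real_inner_self_eq_norm_sq, norm_add_sq_real, norm_sub_sq_real, norm_smul,
      Real.norm_eq_abs, mul_pow, sq_abs, real_inner_comm] at f1 f2 f3 f4 f5 f6 f7 ⊢
    ring_nf at f1 f2 f3 f4 f5 f6 f7 ⊢
    linarith [f1, f2, f3, f4, f5, f6, f7]
  have hU0 : ∀ n, 0 ≤ U n := by
    intro n; simp only [hUdef]; positivity
  have hanonneg : ∀ n, 0 ≤ a n := by
    intro n
    have hip : -(‖μ n - μs‖ * ‖(B (φ n) - p n) + (b n - q n)‖)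
        ≤ ⟪μ n - μs, (B (φ n) - p n) + (b n - q n)⟫ :=
      (abs_le.mp (abs_real_inner_le_norm _ _)).1
    have hy2 : ‖(B (φ n) - p n) + (b n - q n)‖^2 ≤ 2*(U n) := by
      simp only [hUdef]; exact aux_y2 _ _
    have h1 : 0 ≤ s*‖μ n - μs‖^2 + ⟪μ n - μs, (B (φ n) - p n) + (b n - q n)⟫
        + (1/(2*E))*U n :=
      aux_ip_nonneg s (1/(2*E)) _ _ _ _ hs hk2 (hU0 n) hy2 hip
    have han : a n = 2*τ*(s*‖μ n - μs‖^2 + ⟪μ n - μs, (B (φ n) - p n) + (b n - q n)⟫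
        + (1/(2*E))*U n) + (s⁻¹+r)*(‖p (n+1) - B φs‖^2 + ‖b (n+1) - bs‖^2) := by
      rw [hadef]
    have h2 := mul_nonneg h2τ h1
    have h3 : 0 ≤ (s⁻¹+r)*(‖p (n+1) - B φs‖^2 + ‖b (n+1) - bs‖^2) := by positivity
    rw [han]; exact add_nonneg h2 h3
  have haa1 : ∀ n, 1 ≤ n → a n ≤ a 1 := by
    intro n
    induction n with
    | zero => omega
    | succ m ih =>
      intro _
      rcases Nat.lt_or_ge m 1 with hm | hm
      · have : m = 0 := by omega
        subst this; exact le_rfl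
      · have h := hdesc (m+1) (by omega)
        have hsub : m + 1 - 1 = m := by omega
        rw [hsub] at h
        have hnn : 0 ≤ 2*τ*((s - E)*‖μ (m+1) - μ m‖^2
            + ((s⁻¹+r)*(1 - τ/2) - 1/(2*E))*U (m+1)) := by
          apply mul_nonneg h2τ
          apply add_nonneg
          · exact mul_nonneg (by linarith) (sq_nonneg _)
          · exact mul_nonneg hθhpos.le (hU0 _)
        exact le_trans (le_trans (le_add_of_nonneg_right hnn) h) (ih hm)
  have hdesc' : ∀ n, 2 ≤ n → a n + δ*(‖μ n - μ (n-1)‖^2 + U n) ≤ a (n-1) := by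
    intro n hn
    have h := hdesc n hn
    have h1 : δ*‖μ n - μ (n-1)‖^2 ≤ 2*τ*(s-E)*‖μ n - μ (n-1)‖^2 :=
      mul_le_mul_of_nonneg_right hδ1 (sq_nonneg _)
    have h2 : δ*U n ≤ 2*τ*((s⁻¹+r)*(1-τ/2) - 1/(2*E))*U n :=
      mul_le_mul_of_nonneg_right hδ2 (hU0 n)
    ring_nf at h h1 h2 ⊢
    linarith
  -- summability of increments
  set d : ℕ → ℝ := fun m => ‖μ (m+2) - μ (m+1)‖^2 + U (m+2) with hddef
  clear_value d
  have hd0 : ∀ m, 0 ≤ d m := fun m => by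
    simp only [hddef]; exact add_nonneg (sq_nonneg _) (hU0 _)
  have hdle : ∀ m : ℕ, δ * d m ≤ a (m+1) - a (m+2) := by
    intro m
    have h := hdesc' (m+2) (by omega)
    have hsub : m + 2 - 1 = m + 1 := by omega
    rw [hsub] at h
    simp only [hddef]
    linarith
  have hsum : ∀ N, ∑ m ∈ Finset.range N, d m ≤ a 1 / δ := by
    intro N
    rw [le_div_iff₀ hδpos]
    have htel : ∑ m ∈ Finset.range N, (a (m+1) - a (m+2)) = a 1 - a (N+1) := by
      have h := Finset.sum_range_sub' (fun k => a (k+1)) N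
      simpa using h
    have hle : ∑ m ∈ Finset.range N, δ * d m ≤ ∑ m ∈ Finset.range N, (a (m+1) - a (m+2)) :=
      Finset.sum_le_sum fun m _ => hdle m
    have h0 := hanonneg (N+1)
    calc (∑ m ∈ Finset.range N, d m) * δ = ∑ m ∈ Finset.range N, δ * d m := by
          rw [Finset.sum_mul]; exact Finset.sum_congr rfl fun m _ => mul_comm _ _
      _ ≤ a 1 - a (N+1) := htel ▸ hle
      _ ≤ a 1 := by linarith
  have hdlim : Tendsto d atTop (𝓝 0) :=
    (summable_of_sum_range_le hd0 hsum).tendsto_atTop_zero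
  -- limits
  have hUlim : Tendsto U atTop (𝓝 0) := by
    have h1 : Tendsto (fun m => U (m+2)) atTop (𝓝 0) :=
      squeeze_zero (fun m => hU0 _)
        (fun m => by simp only [hddef]; exact le_add_of_nonneg_left (sq_nonneg _)) hdlim
    exact (tendsto_add_atTop_iff_nat 2).mp h1
  have hdmlim2 : Tendsto (fun n => ‖μ n - μ (n-1)‖^2) atTop (𝓝 0) := by
    have h1 : Tendsto (fun m => ‖μ (m+2) - μ (m+2-1)‖^2) atTop (𝓝 0) := by
      have he : ∀ m : ℕ, m + 2 - 1 = m + 1 := fun m => rfl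
      simp only [he]
      exact squeeze_zero (fun m => sq_nonneg _)
        (fun m => by simp only [hddef]; exact le_add_of_nonneg_right (hU0 _)) hdlim
    exact (tendsto_add_atTop_iff_nat 2).mp h1
  have husq : Tendsto (fun n => ‖B (φ n) - p n‖^2) atTop (𝓝 0) :=
    squeeze_zero (fun n => sq_nonneg _)
      (fun n => by simp only [hUdef]; exact le_add_of_nonneg_right (sq_nonneg _)) hUlim
  have hwsq : Tendsto (fun n => ‖b n - q n‖^2) atTop (𝓝 0) :=
    squeeze_zero (fun n => sq_nonneg _)
      (fun n => by simp only [hUdef]; exact le_add_of_nonneg_left (sq_nonneg _)) hUlim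
  have hsqrt0 : ∀ f : ℕ → H, Tendsto (fun n => ‖f n‖^2) atTop (𝓝 0) →
      Tendsto (fun n => ‖f n‖) atTop (𝓝 0) := by
    intro f hf
    have h : (fun n => ‖f n‖) = fun n => Real.sqrt (‖f n‖^2) := by
      funext n; rw [Real.sqrt_sq (norm_nonneg _)]
    rw [h]
    simpa using hf.sqrt
  have hulim : Tendsto (fun n => ‖B (φ n) - p n‖) atTop (𝓝 0) :=
    hsqrt0 (fun n => B (φ n) - p n) husq
  have hwlim : Tendsto (fun n => ‖b n - q n‖) atTop (𝓝 0) :=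
    hsqrt0 (fun n => b n - q n) hwsq
  have hΔlim : Tendsto (fun n => ‖μ n - μ (n-1)‖) atTop (𝓝 0) :=
    hsqrt0 (fun n => μ n - μ (n-1)) hdmlim2
  have hshift : Tendsto (fun n : ℕ => n - 1) atTop atTop := tendsto_sub_atTop_nat 1
  have hulim' : Tendsto (fun n => ‖B (φ (n-1)) - p (n-1)‖) atTop (𝓝 0) := hulim.comp hshift
  have hwlim' : Tendsto (fun n => ‖b (n-1) - q (n-1)‖) atTop (𝓝 0) := hwlim.comp hshift
  -- bounds
  have hUb : ∀ n, 2 ≤ n → U n ≤ a 1 / δ := by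
    intro n hn
    have h := hdesc' n hn
    have h1 := haa1 (n-1) (by omega)
    have h0 := hanonneg n
    rw [le_div_iff₀ hδpos]
    have h2 : 0 ≤ δ * ‖μ n - μ (n-1)‖^2 := mul_nonneg hδpos.le (sq_nonneg _)
    have h3 : δ*(‖μ n - μ (n-1)‖^2 + U n) = δ*‖μ n - μ (n-1)‖^2 + δ*U n := by ring
    linarith [h, h1, h0, h2, h3]
  have hMb : ∀ n, 2 ≤ n → τ*s*‖μ n - μs‖^2 ≤ a 1 + 2*τ*((1/(2*E))*(a 1/δ))
      ∧ (s⁻¹+r)*(‖p (n+1) - B φs‖^2 + ‖b (n+1) - bs‖^2) ≤ a 1 + 2*τ*((1/(2*E))*(a 1/δ)) := by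
    intro n hn
    have hip : -(‖μ n - μs‖ * ‖(B (φ n) - p n) + (b n - q n)‖)
        ≤ ⟪μ n - μs, (B (φ n) - p n) + (b n - q n)⟫ :=
      (abs_le.mp (abs_real_inner_le_norm _ _)).1
    have hy2 : ‖(B (φ n) - p n) + (b n - q n)‖^2 ≤ 2*(U n) := by
      simp only [hUdef]; exact aux_y2 _ _
    have hlb := aux_ip_lb s (1/(2*E)) ‖μ n - μs‖ ‖(B (φ n) - p n) + (b n - q n)‖ (U n)
      (⟪μ n - μs, (B (φ n) - p n) + (b n - q n)⟫) hs hk2 (hU0 n) hy2 hip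
    have han : a n = 2*τ*(s*‖μ n - μs‖^2 + ⟪μ n - μs, (B (φ n) - p n) + (b n - q n)⟫
        + (1/(2*E))*U n) + (s⁻¹+r)*(‖p (n+1) - B φs‖^2 + ‖b (n+1) - bs‖^2) := by rw [hadef]
    have h1 := haa1 n (by omega)
    have h2 := mul_le_mul_of_nonneg_left hlb h2τ
    have h3 := mul_le_mul_of_nonneg_left (hUb n hn) (by positivity : (0:ℝ) ≤ 2*τ*(1/(2*E)))
    have hP : 0 ≤ (s⁻¹+r)*(‖p (n+1) - B φs‖^2 + ‖b (n+1) - bs‖^2) := by positivity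
    have hx : 0 ≤ τ*s*‖μ n - μs‖^2 := by positivity
    constructor
    · nlinarith [h2, h3, han, h1, hP]
    · nlinarith [h2, h3, han, h1, hx]
  have hμb : ∀ n, 2 ≤ n →
      ‖μ n - μs‖ ≤ Real.sqrt ((a 1 + 2*τ*((1/(2*E))*(a 1/δ)))/(τ*s)) := by
    intro n hn
    have h := (hMb n hn).1
    have h2 : ‖μ n - μs‖^2 ≤ (a 1 + 2*τ*((1/(2*E))*(a 1/δ)))/(τ*s) := by
      rw [le_div_iff₀ (by positivity)]
      nlinarith [h]
    calc ‖μ n - μs‖ = Real.sqrt (‖μ n - μs‖^2) := (Real.sqrt_sq (norm_nonneg _)).symm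
      _ ≤ _ := Real.sqrt_le_sqrt h2
  have hμnb : ∀ n, 2 ≤ n →
      ‖μ n‖ ≤ Real.sqrt ((a 1 + 2*τ*((1/(2*E))*(a 1/δ)))/(τ*s)) + ‖μs‖ := by
    intro n hn
    calc ‖μ n‖ = ‖μ n - μs + μs‖ := by rw [sub_add_cancel]
      _ ≤ ‖μ n - μs‖ + ‖μs‖ := norm_add_le _ _
      _ ≤ _ := by have := hμb n hn; linarith
  have hpbb : ∀ n, 3 ≤ n →
      ‖p n - B φs‖ ≤ Real.sqrt ((a 1 + 2*τ*((1/(2*E))*(a 1/δ)))/(s⁻¹+r))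
      ∧ ‖b n - bs‖ ≤ Real.sqrt ((a 1 + 2*τ*((1/(2*E))*(a 1/δ)))/(s⁻¹+r)) := by
    intro n hn
    have h := (hMb (n-1) (by omega)).2
    have hsub : n - 1 + 1 = n := by omega
    rw [hsub] at h
    have hsq : ‖p n - B φs‖^2 + ‖b n - bs‖^2 ≤ (a 1 + 2*τ*((1/(2*E))*(a 1/δ)))/(s⁻¹+r) := by
      rw [le_div_iff₀ (by positivity)]
      nlinarith [h]
    constructor
    · calc ‖p n - B φs‖ = Real.sqrt (‖p n - B φs‖^2) := (Real.sqrt_sq (norm_nonneg _)).symm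
        _ ≤ _ := Real.sqrt_le_sqrt (by nlinarith [sq_nonneg ‖b n - bs‖])
    · calc ‖b n - bs‖ = Real.sqrt (‖b n - bs‖^2) := (Real.sqrt_sq (norm_nonneg _)).symm
        _ ≤ _ := Real.sqrt_le_sqrt (by nlinarith [sq_nonneg ‖p n - B φs‖])
  -- squeeze inequalities
  have hup : ∀ n, 1 ≤ n →
      (F (q n) + G (φ n) - I (μ n) + ⟪μ n, p n - b n⟫) - (F bs + G φs - I μs + ⟪μs, B φs - bs⟫)
      ≤ -⟪μ n, (B (φ n) - p n) + (b n - q n)⟫ - (s⁻¹+r)*(‖B (φ n) - p n‖^2 + ‖b n - q n‖^2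
          + ⟪B (φ n) - p n, p n - B φs⟫ - ⟪b n - q n, b n - bs⟫) := by
    intro n hn
    have f1 := hiii2 n hn φs
    have f2 := hiv2 n hn bs
    have f3 := hsadA (μ n)
    simp only [mul_zero, ge_iff_le, inner_add_left, inner_add_right, inner_sub_left,
      inner_sub_right, real_inner_smul_left, real_inner_smul_right,
      real_inner_self_eq_norm_sq, norm_add_sq_real, norm_sub_sq_real, norm_smul,
      Real.norm_eq_abs, mul_pow, sq_abs, real_inner_comm] at f1 f2 f3 ⊢
    ring_nf at f1 f2 f3 ⊢
    linarith [f1, f2, f3]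
  have hlo : ∀ n, 2 ≤ n →
      -⟪μs, (B (φ n) - p n) + (b n - q n)⟫ + 2*s*⟪μ n - μs, μ n - μ (n-1)⟫
        - ⟪μ n - μs, B (φ (n-1)) - p (n-1)⟫ - ⟪μ n - μs, b (n-1) - q (n-1)⟫
      ≤ (F (q n) + G (φ n) - I (μ n) + ⟪μ n, p n - b n⟫)
        - (F bs + G φs - I μs + ⟪μs, B φs - bs⟫) := by
    intro n hn
    have f1 := hi2 n hn μs
    have f2 := hsadB (φ n) (q n)
    simp only [mul_zero, ge_iff_le, inner_add_left, inner_add_right, inner_sub_left,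
      inner_sub_right, real_inner_smul_left, real_inner_smul_right,
      real_inner_self_eq_norm_sq, norm_add_sq_real, norm_sub_sq_real, norm_smul,
      Real.norm_eq_abs, mul_pow, sq_abs, real_inner_comm] at f1 f2 ⊢
    ring_nf at f1 f2 ⊢
    linarith [f1, f2]
  -- limits of the squeeze bounds
  have hMμ0 : 0 ≤ Real.sqrt ((a 1 + 2*τ*((1/(2*E))*(a 1/δ)))/(τ*s)) := Real.sqrt_nonneg _
  have hCp0 : 0 ≤ Real.sqrt ((a 1 + 2*τ*((1/(2*E))*(a 1/δ)))/(s⁻¹+r)) := Real.sqrt_nonneg _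
  have T1 : Tendsto (fun n => ⟪μ n, (B (φ n) - p n) + (b n - q n)⟫) atTop (𝓝 0) := by
    apply squeeze_zero_norm' (a := fun n =>
      (Real.sqrt ((a 1 + 2*τ*((1/(2*E))*(a 1/δ)))/(τ*s)) + ‖μs‖) * (‖B (φ n) - p n‖ + ‖b n - q n‖))
    · filter_upwards [eventually_ge_atTop 2] with n hn
      rw [Real.norm_eq_abs]
      calc |⟪μ n, (B (φ n) - p n) + (b n - q n)⟫|
          ≤ ‖μ n‖ * ‖(B (φ n) - p n) + (b n - q n)‖ := abs_real_inner_le_norm _ _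
        _ ≤ _ := mul_le_mul (hμnb n hn) (norm_add_le _ _) (norm_nonneg _)
            (by positivity)
    · have h := (hulim.add hwlim).const_mul
        (Real.sqrt ((a 1 + 2*τ*((1/(2*E))*(a 1/δ)))/(τ*s)) + ‖μs‖)
      simpa using h
  have T3 : Tendsto (fun n => ⟪B (φ n) - p n, p n - B φs⟫) atTop (𝓝 0) := by
    apply squeeze_zero_norm' (a := fun n =>
      ‖B (φ n) - p n‖ * Real.sqrt ((a 1 + 2*τ*((1/(2*E))*(a 1/δ)))/(s⁻¹+r)))
    · filter_upwards [eventually_ge_atTop 3] with n hn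
      rw [Real.norm_eq_abs]
      calc |⟪B (φ n) - p n, p n - B φs⟫| ≤ ‖B (φ n) - p n‖ * ‖p n - B φs‖ :=
            abs_real_inner_le_norm _ _
        _ ≤ _ := mul_le_mul_of_nonneg_left (hpbb n hn).1 (norm_nonneg _)
    · have h := hulim.mul_const (Real.sqrt ((a 1 + 2*τ*((1/(2*E))*(a 1/δ)))/(s⁻¹+r)))
      simpa using h
  have T4 : Tendsto (fun n => ⟪b n - q n, b n - bs⟫) atTop (𝓝 0) := by
    apply squeeze_zero_norm' (a := fun n =>
      ‖b n - q n‖ * Real.sqrt ((a 1 + 2*τ*((1/(2*E))*(a 1/δ)))/(s⁻¹+r)))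
    · filter_upwards [eventually_ge_atTop 3] with n hn
      rw [Real.norm_eq_abs]
      calc |⟪b n - q n, b n - bs⟫| ≤ ‖b n - q n‖ * ‖b n - bs‖ := abs_real_inner_le_norm _ _
        _ ≤ _ := mul_le_mul_of_nonneg_left (hpbb n hn).2 (norm_nonneg _)
    · have h := hwlim.mul_const (Real.sqrt ((a 1 + 2*τ*((1/(2*E))*(a 1/δ)))/(s⁻¹+r)))
      simpa using h
  have T5 : Tendsto (fun n => ⟪μs, (B (φ n) - p n) + (b n - q n)⟫) atTop (𝓝 0) := by
    apply squeeze_zero_norm (a := fun n => ‖μs‖ * (‖B (φ n) - p n‖ + ‖b n - q n‖))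
    · intro n
      rw [Real.norm_eq_abs]
      calc |⟪μs, (B (φ n) - p n) + (b n - q n)⟫|
          ≤ ‖μs‖ * ‖(B (φ n) - p n) + (b n - q n)‖ := abs_real_inner_le_norm _ _
        _ ≤ _ := mul_le_mul_of_nonneg_left (norm_add_le _ _) (norm_nonneg _)
    · have h := (hulim.add hwlim).const_mul ‖μs‖
      simpa using h
  have T6 : Tendsto (fun n => ⟪μ n - μs, μ n - μ (n-1)⟫) atTop (𝓝 0) := by
    apply squeeze_zero_norm' (a := fun n =>
      Real.sqrt ((a 1 + 2*τ*((1/(2*E))*(a 1/δ)))/(τ*s)) * ‖μ n - μ (n-1)‖)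
    · filter_upwards [eventually_ge_atTop 2] with n hn
      rw [Real.norm_eq_abs]
      calc |⟪μ n - μs, μ n - μ (n-1)⟫| ≤ ‖μ n - μs‖ * ‖μ n - μ (n-1)‖ :=
            abs_real_inner_le_norm _ _
        _ ≤ _ := mul_le_mul_of_nonneg_right (hμb n hn) (norm_nonneg _)
    · have h := hΔlim.const_mul (Real.sqrt ((a 1 + 2*τ*((1/(2*E))*(a 1/δ)))/(τ*s)))
      simpa using h
  have T7 : Tendsto (fun n => ⟪μ n - μs, B (φ (n-1)) - p (n-1)⟫) atTop (𝓝 0) := by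
    apply squeeze_zero_norm' (a := fun n =>
      Real.sqrt ((a 1 + 2*τ*((1/(2*E))*(a 1/δ)))/(τ*s)) * ‖B (φ (n-1)) - p (n-1)‖)
    · filter_upwards [eventually_ge_atTop 2] with n hn
      rw [Real.norm_eq_abs]
      calc |⟪μ n - μs, B (φ (n-1)) - p (n-1)⟫|
          ≤ ‖μ n - μs‖ * ‖B (φ (n-1)) - p (n-1)‖ := abs_real_inner_le_norm _ _
        _ ≤ _ := mul_le_mul_of_nonneg_right (hμb n hn) (norm_nonneg _)
    · have h := hulim'.const_mul (Real.sqrt ((a 1 + 2*τ*((1/(2*E))*(a 1/δ)))/(τ*s)))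
      simpa using h
  have T8 : Tendsto (fun n => ⟪μ n - μs, b (n-1) - q (n-1)⟫) atTop (𝓝 0) := by
    apply squeeze_zero_norm' (a := fun n =>
      Real.sqrt ((a 1 + 2*τ*((1/(2*E))*(a 1/δ)))/(τ*s)) * ‖b (n-1) - q (n-1)‖)
    · filter_upwards [eventually_ge_atTop 2] with n hn
      rw [Real.norm_eq_abs]
      calc |⟪μ n - μs, b (n-1) - q (n-1)⟫|
          ≤ ‖μ n - μs‖ * ‖b (n-1) - q (n-1)‖ := abs_real_inner_le_norm _ _
        _ ≤ _ := mul_le_mul_of_nonneg_right (hμb n hn) (norm_nonneg _)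
    · have h := hwlim'.const_mul (Real.sqrt ((a 1 + 2*τ*((1/(2*E))*(a 1/δ)))/(τ*s)))
      simpa using h
  have hupt : Tendsto (fun n => -⟪μ n, (B (φ n) - p n) + (b n - q n)⟫
      - (s⁻¹+r)*(‖B (φ n) - p n‖^2 + ‖b n - q n‖^2
        + ⟪B (φ n) - p n, p n - B φs⟫ - ⟪b n - q n, b n - bs⟫)) atTop (𝓝 0) := by
    have h := (T1.neg).sub ((((husq.add hwsq).add T3).sub T4).const_mul (s⁻¹+r))
    simpa using h
  have hlot : Tendsto (fun n => -⟪μs, (B (φ n) - p n) + (b n - q n)⟫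
      + 2*s*⟪μ n - μs, μ n - μ (n-1)⟫ - ⟪μ n - μs, B (φ (n-1)) - p (n-1)⟫
      - ⟪μ n - μs, b (n-1) - q (n-1)⟫) atTop (𝓝 0) := by
    have h := (((T5.neg).add (T6.const_mul (2*s))).sub T7).sub T8
    simpa using h
  have hmain := tendsto_of_tendsto_of_tendsto_of_le_of_le' hlot hupt
      (eventually_atTop.2 ⟨2, fun n hn => hlo n hn⟩)
      (eventually_atTop.2 ⟨1, fun n hn => hup n hn⟩)
  have hfin := hmain.add_const (F bs + G φs - I μs + ⟪μs, B φs - bs⟫)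
  simpa using hfin
end

section
/- For Algorithm-1 iterates with a saddle point (φ*, q*, μ*) of L, p* = Bφ*, b* = q*, step size 0 < ρ < (2rs² + s)/(1 + rs)², and B injective with closed range: if G is uniformly convex on bounded subsets of V, then φⁿ → φ* strongly in V, Bφⁿ → Bφ* and pⁿ → Bφ* strongly in H; if moreover F is uniformly convex on bounded subsets of H, then qⁿ → q* and bⁿ → q* strongly in H. -/
open RealInnerProductSpace Filter Topology

/-- `u` is a subgradient of `J` at `x`. -/
def IsSubgradient {E : Type*} [NormedAddCommGroup E] [InnerProductSpace ℝ E]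
    (J : E → ℝ) (x u : E) : Prop :=
  ∀ z, J z ≥ J x + ⟪u, z - x⟫

/-- `J` is uniformly convex on the set `U`. -/
def UniformlyConvexOnSet {E : Type*} [NormedAddCommGroup E] [InnerProductSpace ℝ E]
    (J : E → ℝ) (U : Set E) : Prop :=
  ∃ Ψ : ℝ → ℝ, StrictMonoOn Ψ (Set.Ici 0) ∧ Ψ 0 = 0 ∧ (∀ t, 0 ≤ t → 0 ≤ Ψ t) ∧
    ∀ x ∈ U, ∀ y ∈ U, ∀ u v : E, IsSubgradient J x u → IsSubgradient J y v →
      ⟪u - v, x - y⟫ ≥ Ψ ‖x - y‖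

/-- `J` is uniformly convex on every bounded subset of its domain. -/
def UniformlyConvexOnBoundedSets {E : Type*} [NormedAddCommGroup E] [InnerProductSpace ℝ E]
    (J : E → ℝ) : Prop :=
  ∀ U : Set E, Bornology.IsBounded U → UniformlyConvexOnSet J U

/-!
A Lyapunov argument. Monotonicity of `∂I` between `μⁿ⁺¹` and `μ*`, combined with the updates
(ii) and (v), gives
`Eₙ₊₁ + δ (‖Bφⁿ⁺¹ - pⁿ⁺¹‖² + ‖bⁿ⁺¹ - qⁿ⁺¹‖²) + g_G + g_F ≤ Eₙ` for the energy
`Eₙ = s/2 (‖νⁿ - μ*‖² + ‖ηⁿ - μ*‖²) + 1/(2ρ) (‖pⁿ⁺¹ - Bφ*‖² + ‖bⁿ⁺¹ - q*‖²)`,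
where `δ > 0` is the step-size condition and `g_G, g_F ≥ 0` are the monotonicity gaps of `∂G`
and `∂F` between the iterates and the saddle point (steps (iii), (iv) are subgradient
inclusions). Hence the residuals and the gaps tend to zero, while `Eₙ ≤ E₀` keeps `Bφⁿ` and `qⁿ`
bounded; `B` being injective with closed range keeps `φⁿ` bounded, and uniform convexity on
that bounded set turns vanishing gaps into strong convergence.
-/

section Subgradient

variable {E : Type*} [NormedAddCommGroup E] [InnerProductSpace ℝ E] {J : E → ℝ} {x y u v : E}

theorem isSubgradient_of_forall (h : ∀ z, J z - J x + ⟪u, x - z⟫ ≥ 0) : IsSubgradient J x u :=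
  fun z => by have := h z; rw [← neg_sub z x, inner_neg_right] at this; linarith

theorem IsSubgradient.inner_sub_nonneg (hu : IsSubgradient J x u) (hv : IsSubgradient J y v) :
    0 ≤ ⟪u - v, x - y⟫ := by
  have hux := hu y
  have hvy := hv x
  rw [← neg_sub x y, inner_neg_right] at hux
  rw [inner_sub_left]
  linarith

theorem isSubgradient_neg_adjoint {H : Type*} [NormedAddCommGroup H] [InnerProductSpace ℝ H]
    [CompleteSpace E] [CompleteSpace H] (B : E →L[ℝ] H) {w : H}
    (h : ∀ z, J z - J x + ⟪w, B z - B x⟫ ≥ 0) : IsSubgradient J x (-B.adjoint w) :=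
  fun z => by
    have := h z
    rw [inner_neg_left, ContinuousLinearMap.adjoint_inner_left, map_sub]
    linarith

end Subgradient

theorem tendsto_zero_of_strictMonoOn_comp {ι : Type*} {l : Filter ι} {Ψ : ℝ → ℝ}
    (hΨ : StrictMonoOn Ψ (Set.Ici 0)) (hΨ0 : Ψ 0 = 0) {t : ι → ℝ} (ht : ∀ i, 0 ≤ t i)
    (hΨt : Tendsto (fun i => Ψ (t i)) l (𝓝 0)) : Tendsto t l (𝓝 0) := by
  refine tendsto_order.2 ⟨fun a ha => .of_forall fun i => ha.trans_le (ht i), fun ε hε => ?_⟩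
  have hΨε : 0 < Ψ ε := hΨ0 ▸ hΨ Set.self_mem_Ici hε.le hε
  filter_upwards [(tendsto_order.1 hΨt).2 _ hΨε] with i hi
  exact lt_of_not_ge fun hεt => hi.not_ge (hΨ.monotoneOn hε.le (ht i) hεt)

theorem UniformlyConvexOnBoundedSets.tendsto_of_inner_sub_tendsto_zero
    {E : Type*} [NormedAddCommGroup E] [InnerProductSpace ℝ E] {J : E → ℝ}
    (hJ : UniformlyConvexOnBoundedSets J) {ι : Type*} {l : Filter ι} {x u : ι → E} {y v : E}
    (hx : Bornology.IsBounded (Set.range x)) (hu : ∀ i, IsSubgradient J (x i) (u i))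
    (hv : IsSubgradient J y v) (hgap : Tendsto (fun i => ⟪u i - v, x i - y⟫) l (𝓝 0)) :
    Tendsto x l (𝓝 y) := by
  obtain ⟨Ψ, hΨ, hΨ0, hΨnonneg, hΨgap⟩ := hJ _ (hx.insert y)
  have hΨ_le i : Ψ ‖x i - y‖ ≤ ⟪u i - v, x i - y⟫ :=
    hΨgap _ (.inr ⟨i, rfl⟩) _ (.inl rfl) _ _ (hu i) hv
  rw [tendsto_iff_norm_sub_tendsto_zero]
  exact tendsto_zero_of_strictMonoOn_comp hΨ hΨ0 (fun i => norm_nonneg _)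
    (squeeze_zero (fun i => hΨnonneg _ (norm_nonneg _)) hΨ_le hgap)

theorem tendsto_zero_of_add_le_s8 {e d : ℕ → ℝ} (he : ∀ n, 0 ≤ e n) (hd : ∀ n, 0 ≤ d n)
    (h : ∀ n, e (n + 1) + d n ≤ e n) : Tendsto d atTop (𝓝 0) := by
  have hsum n : ∑ i ∈ Finset.range n, d i ≤ e 0 - e n := by
    induction n with
    | zero => simp
    | succ n ih => rw [Finset.sum_range_succ]; linarith [h n]
  exact (summable_of_sum_range_le hd fun n => (hsum n).trans (by linarith [he n]))
    |>.tendsto_atTop_zero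

theorem tendsto_zero_of_mul_norm_sq_le_s8 {E : Type*} [NormedAddCommGroup E] {ι : Type*}
    {l : Filter ι} {x : ι → E} {d : ι → ℝ} {c : ℝ} (hc : 0 < c) (hd : Tendsto d l (𝓝 0))
    (h : ∀ i, c * ‖x i‖ ^ 2 ≤ d i) : Tendsto x l (𝓝 0) := by
  have hsq : Tendsto (fun i => ‖x i‖ ^ 2) l (𝓝 0) :=
    squeeze_zero (fun i => sq_nonneg _) (fun i => (le_div_iff₀' hc).2 (h i))
      (by simpa using hd.div_const c)
  rw [tendsto_zero_iff_norm_tendsto_zero]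
  simpa [Real.sqrt_sq (norm_nonneg _)] using hsq.sqrt

theorem norm_le_sqrt_of_mul_sq_le {E : Type*} [NormedAddCommGroup E] {x : E} {c R : ℝ}
    (hc : 0 < c) (h : c * ‖x‖ ^ 2 ≤ R) : ‖x‖ ≤ √(R / c) :=
  (abs_norm x).symm ▸ Real.abs_le_sqrt ((le_div_iff₀' hc).2 h)

theorem isBounded_range_of_norm_sub_le {ι E : Type*} [SeminormedAddCommGroup E] {x : ι → E}
    {y : E} {R : ℝ} (h : ∀ i, ‖x i - y‖ ≤ R) : Bornology.IsBounded (Set.range x) :=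
  Metric.isBounded_closedBall.subset <|
    Set.range_subset_iff.2 fun i => mem_closedBall_iff_norm.2 (h i)

-- The dissipation rate δ of the energy; it equals `(2 r s² + s - ρ (1 + r s)²) / (2 s²)`,
-- so it is positive exactly under the step-size condition.
noncomputable def algorithm1Rate (r s ρ : ℝ) : ℝ :=
  (r + 1 / s) * (1 - ρ * (r + 1 / s) / 2) - 1 / (2 * s)

theorem algorithm1Rate_pos {r s ρ : ℝ} (hs : 0 < s) (hρ : 0 < ρ)
    (hρ' : ρ < (2 * r * s ^ 2 + s) / (1 + r * s) ^ 2) : 0 < algorithm1Rate r s ρ := by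
  have hden : 0 < (1 + r * s) ^ 2 :=
    (sq_nonneg _).lt_of_ne fun h => by rw [← h, div_zero] at hρ'; linarith
  have hnum : ρ * (1 + r * s) ^ 2 < 2 * r * s ^ 2 + s := (lt_div_iff₀ hden).1 hρ'
  have : algorithm1Rate r s ρ = (2 * r * s ^ 2 + s - ρ * (1 + r * s) ^ 2) / (2 * s ^ 2) := by
    unfold algorithm1Rate; field_simp; ring
  rw [this]
  exact div_pos (by linarith) (by positivity)

-- One step of the energy estimate, read with `m = μⁿ⁺¹ - μ*`, `a = Bφⁿ⁺¹ - pⁿ⁺¹`,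
-- `c = bⁿ⁺¹ - qⁿ⁺¹`, `ν₀ = νⁿ - μ*`, `η₀ = ηⁿ - μ*`, `P = pⁿ⁺¹ - Bφ*`, `Q = bⁿ⁺¹ - q*`.
theorem lyapunov_step {E : Type*} [NormedAddCommGroup E] [InnerProductSpace ℝ E] {r s ρ : ℝ}
    (hs : 0 < s) (hρ : 0 < ρ) (m a c ν₀ η₀ P Q : E)
    (hmono : 0 ≤ ⟪P - Q - s • (m - ν₀) - s • (m - η₀), m⟫) :
    s / 2 * (‖m + s⁻¹ • a‖ ^ 2 + ‖m + s⁻¹ • c‖ ^ 2)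
        + 1 / (2 * ρ) * (‖P + (ρ * (r + 1 / s)) • a‖ ^ 2 + ‖Q - (ρ * (r + 1 / s)) • c‖ ^ 2)
        + algorithm1Rate r s ρ * (‖a‖ ^ 2 + ‖c‖ ^ 2)
        - ⟪m + s⁻¹ • a + r • a, a + P⟫ + ⟪m + s⁻¹ • c + r • c, Q - c⟫
      ≤ s / 2 * (‖ν₀‖ ^ 2 + ‖η₀‖ ^ 2) + 1 / (2 * ρ) * (‖P‖ ^ 2 + ‖Q‖ ^ 2) := by
  have hν : 0 ≤ s / 2 * ‖m - ν₀‖ ^ 2 := by positivity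
  have hη : 0 ≤ s / 2 * ‖m - η₀‖ ^ 2 := by positivity
  have key : s / 2 * (‖ν₀‖ ^ 2 + ‖η₀‖ ^ 2) + 1 / (2 * ρ) * (‖P‖ ^ 2 + ‖Q‖ ^ 2)
      - (s / 2 * (‖m + s⁻¹ • a‖ ^ 2 + ‖m + s⁻¹ • c‖ ^ 2)
        + 1 / (2 * ρ) * (‖P + (ρ * (r + 1 / s)) • a‖ ^ 2 + ‖Q - (ρ * (r + 1 / s)) • c‖ ^ 2)
        + algorithm1Rate r s ρ * (‖a‖ ^ 2 + ‖c‖ ^ 2)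
        - ⟪m + s⁻¹ • a + r • a, a + P⟫ + ⟪m + s⁻¹ • c + r • c, Q - c⟫)
      = ⟪P - Q - s • (m - ν₀) - s • (m - η₀), m⟫
        + s / 2 * ‖m - ν₀‖ ^ 2 + s / 2 * ‖m - η₀‖ ^ 2 := by
    simp only [algorithm1Rate, ← real_inner_self_eq_norm_sq, inner_add_left, inner_add_right,
      inner_sub_left, inner_sub_right, real_inner_smul_left, real_inner_smul_right]
    simp only [real_inner_comm a m, real_inner_comm c m, real_inner_comm ν₀ m,
      real_inner_comm η₀ m, real_inner_comm P m, real_inner_comm Q m, real_inner_comm P a,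
      real_inner_comm Q c]
    field_simp
    ring
  linarith

-- The relations (i)–(v) of Algorithm-1.
structure Algorithm1 {V H : Type*} [NormedAddCommGroup V] [InnerProductSpace ℝ V]
    [NormedAddCommGroup H] [InnerProductSpace ℝ H] (B : V →L[ℝ] H) (F : H → ℝ) (G : V → ℝ)
    (I : H → ℝ) (r s ρ : ℝ) (φ : ℕ → V) (q μ p b ν η : ℕ → H) : Prop where
  step_I : ∀ n, 1 ≤ n → ∀ μ' : H,
    I μ' - I (μ n) + ⟪μ n - μ', p n - b n⟫ - s * ⟪μ n - μ', μ n - ν (n-1)⟫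
      - s * ⟪μ n - μ', μ n - η (n-1)⟫ ≥ 0
  step_dual : ∀ n, 1 ≤ n →
    ν n = s⁻¹ • (B (φ n) - p n) + μ n ∧ η n = s⁻¹ • (b n - q n) + μ n
  step_G : ∀ n, 1 ≤ n → ∀ φ' : V,
    G φ' - G (φ n) + ⟪ν n + r • (B (φ n) - p n), B φ' - B (φ n)⟫ ≥ 0
  step_F : ∀ n, 1 ≤ n → ∀ q' : H,
    F q' - F (q n) + ⟪η n + r • (b n - q n), q n - q'⟫ ≥ 0
  step_relax : ∀ n, 1 ≤ n →
    p (n+1) = p n + (ρ * (r + 1/s)) • (B (φ n) - p n) ∧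
    b (n+1) = b n - (ρ * (r + 1/s)) • (b n - q n)

noncomputable def algorithm1Energy {H : Type*} [NormedAddCommGroup H] [InnerProductSpace ℝ H]
    (s ρ : ℝ) (ps qs μs : H) (p b ν η : ℕ → H) (n : ℕ) : ℝ :=
  s / 2 * (‖ν n - μs‖ ^ 2 + ‖η n - μs‖ ^ 2)
    + 1 / (2 * ρ) * (‖p (n + 1) - ps‖ ^ 2 + ‖b (n + 1) - qs‖ ^ 2)

section Iterates

variable {V H : Type*} [NormedAddCommGroup V] [InnerProductSpace ℝ V]
  [NormedAddCommGroup H] [InnerProductSpace ℝ H]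
  {B : V →L[ℝ] H} {F : H → ℝ} {G : V → ℝ} {I : H → ℝ} {r s ρ : ℝ}
  {φ : ℕ → V} {q μ p b ν η : ℕ → H} {φs : V} {qs μs : H}

theorem isSubgradient_of_isSaddlePoint [CompleteSpace V] [CompleteSpace H] {L : V → H → H → ℝ}
    (hL : ∀ φ' q' μ', L φ' q' μ' = F q' + G φ' - I μ' + ⟪μ', B φ' - q'⟫)
    (hsaddle : ∀ φ' q' μ', L φs qs μ' ≤ L φs qs μs ∧ L φs qs μs ≤ L φ' q' μs) :
    IsSubgradient G φs (-B.adjoint μs) ∧ IsSubgradient F qs μs ∧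
      IsSubgradient I μs (B φs - qs) := by
  refine ⟨isSubgradient_neg_adjoint B fun z => ?_, isSubgradient_of_forall fun z => ?_,
    isSubgradient_of_forall fun z => ?_⟩
  · have := (hsaddle z qs μs).2
    rw [hL, hL] at this
    simp only [inner_sub_right] at this ⊢
    linarith
  · have := (hsaddle φs z μs).2
    rw [hL, hL] at this
    simp only [inner_sub_right] at this ⊢
    linarith
  · have := (hsaddle φs qs z).1
    rw [hL, hL] at this
    simp only [inner_sub_left, inner_sub_right, real_inner_comm (B φs), real_inner_comm qs]
      at this ⊢
    linarith

namespace Algorithm1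

theorem isSubgradient_I (h : Algorithm1 B F G I r s ρ φ q μ p b ν η) (n : ℕ) :
    IsSubgradient I (μ (n + 1))
      (p (n + 1) - b (n + 1) - s • (μ (n + 1) - ν n) - s • (μ (n + 1) - η n)) :=
  isSubgradient_of_forall fun z => by
    have := h.step_I (n + 1) n.succ_pos z
    rw [real_inner_comm]
    simp only [Nat.add_sub_cancel, inner_sub_right, real_inner_smul_right] at this ⊢
    linarith

theorem isSubgradient_G [CompleteSpace V] [CompleteSpace H]
    (h : Algorithm1 B F G I r s ρ φ q μ p b ν η) (n : ℕ) :
    IsSubgradient G (φ (n + 1))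
      (-B.adjoint (ν (n + 1) + r • (B (φ (n + 1)) - p (n + 1)))) :=
  isSubgradient_neg_adjoint B (h.step_G (n + 1) n.succ_pos)

theorem isSubgradient_F (h : Algorithm1 B F G I r s ρ φ q μ p b ν η) (n : ℕ) :
    IsSubgradient F (q (n + 1)) (η (n + 1) + r • (b (n + 1) - q (n + 1))) :=
  isSubgradient_of_forall (h.step_F (n + 1) n.succ_pos)

theorem energy_step [CompleteSpace V] [CompleteSpace H]
    (h : Algorithm1 B F G I r s ρ φ q μ p b ν η) (hs : 0 < s) (hρ : 0 < ρ)
    (hIs : IsSubgradient I μs (B φs - qs)) (n : ℕ) :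
    algorithm1Energy s ρ (B φs) qs μs p b ν η (n + 1)
        + (algorithm1Rate r s ρ * (‖B (φ (n + 1)) - p (n + 1)‖ ^ 2 + ‖b (n + 1) - q (n + 1)‖ ^ 2)
          + ⟪-B.adjoint (ν (n + 1) + r • (B (φ (n + 1)) - p (n + 1))) - -B.adjoint μs,
              φ (n + 1) - φs⟫
          + ⟪η (n + 1) + r • (b (n + 1) - q (n + 1)) - μs, q (n + 1) - qs⟫)
      ≤ algorithm1Energy s ρ (B φs) qs μs p b ν η n := by
  obtain ⟨hν, hη⟩ := h.step_dual (n + 1) n.succ_pos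
  obtain ⟨hp, hb⟩ := h.step_relax (n + 1) n.succ_pos
  have hmono := (h.isSubgradient_I n).inner_sub_nonneg hIs
  have key := lyapunov_step (r := r) hs hρ (μ (n + 1) - μs) (B (φ (n + 1)) - p (n + 1))
    (b (n + 1) - q (n + 1)) (ν n - μs) (η n - μs) (p (n + 1) - B φs) (b (n + 1) - qs)
    (by convert hmono using 2; module)
  have hgapG : ⟪-B.adjoint (ν (n + 1) + r • (B (φ (n + 1)) - p (n + 1))) - -B.adjoint μs,
      φ (n + 1) - φs⟫
      = -⟪ν (n + 1) - μs + r • (B (φ (n + 1)) - p (n + 1)),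
          B (φ (n + 1)) - p (n + 1) + (p (n + 1) - B φs)⟫ := by
    rw [← neg_sub', ← map_sub, inner_neg_left, ContinuousLinearMap.adjoint_inner_left, map_sub]
    congr 2 <;> abel
  have hgapF : ⟪η (n + 1) + r • (b (n + 1) - q (n + 1)) - μs, q (n + 1) - qs⟫
      = ⟪η (n + 1) - μs + r • (b (n + 1) - q (n + 1)),
          b (n + 1) - qs - (b (n + 1) - q (n + 1))⟫ := by
    congr 1 <;> abel
  have hνs : μ (n + 1) - μs + s⁻¹ • (B (φ (n + 1)) - p (n + 1)) = ν (n + 1) - μs := by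
    rw [hν]; module
  have hηs : μ (n + 1) - μs + s⁻¹ • (b (n + 1) - q (n + 1)) = η (n + 1) - μs := by
    rw [hη]; module
  have hps : p (n + 1) - B φs + (ρ * (r + 1 / s)) • (B (φ (n + 1)) - p (n + 1))
      = p (n + 1 + 1) - B φs := by
    rw [hp]; module
  have hbs : b (n + 1) - qs - (ρ * (r + 1 / s)) • (b (n + 1) - q (n + 1)) = b (n + 1 + 1) - qs := by
    rw [hb]; module
  rw [hνs, hηs, hps, hbs] at key
  rw [hgapG, hgapF]
  unfold algorithm1Energy
  linarith

theorem tendsto_residuals_and_gaps [CompleteSpace V] [CompleteSpace H]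
    (h : Algorithm1 B F G I r s ρ φ q μ p b ν η) (hs : 0 < s) (hρ : 0 < ρ)
    (hρ' : ρ < (2 * r * s ^ 2 + s) / (1 + r * s) ^ 2)
    (hGs : IsSubgradient G φs (-B.adjoint μs)) (hFs : IsSubgradient F qs μs)
    (hIs : IsSubgradient I μs (B φs - qs)) :
    Tendsto (fun n => B (φ n) - p n) atTop (𝓝 0) ∧ Tendsto (fun n => b n - q n) atTop (𝓝 0) ∧
    Tendsto (fun n => ⟪-B.adjoint (ν (n + 1) + r • (B (φ (n + 1)) - p (n + 1))) - -B.adjoint μs,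
      φ (n + 1) - φs⟫) atTop (𝓝 0) ∧
    Tendsto (fun n => ⟪η (n + 1) + r • (b (n + 1) - q (n + 1)) - μs, q (n + 1) - qs⟫)
      atTop (𝓝 0) := by
  set δ := algorithm1Rate r s ρ
  have hδ : 0 < δ := algorithm1Rate_pos hs hρ hρ'
  have hgG n := (h.isSubgradient_G n).inner_sub_nonneg hGs
  have hgF n := (h.isSubgradient_F n).inner_sub_nonneg hFs
  have hstep := h.energy_step hs hρ hIs
  have hd := tendsto_zero_of_add_le_s8 (e := algorithm1Energy s ρ (B φs) qs μs p b ν η)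
    (fun n => by unfold algorithm1Energy; positivity)
    (fun n => add_nonneg (add_nonneg (by positivity) (hgG n)) (hgF n)) hstep
  refine ⟨(tendsto_add_atTop_iff_nat 1).1 (tendsto_zero_of_mul_norm_sq_le_s8 hδ hd fun n => ?_),
    (tendsto_add_atTop_iff_nat 1).1 (tendsto_zero_of_mul_norm_sq_le_s8 hδ hd fun n => ?_),
    squeeze_zero hgG (fun n => ?_) hd, squeeze_zero hgF (fun n => ?_) hd⟩ <;>
  nlinarith [hgG n, hgF n, sq_nonneg ‖B (φ (n + 1)) - p (n + 1)‖,
    sq_nonneg ‖b (n + 1) - q (n + 1)‖]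

theorem isBounded_iterates [CompleteSpace V] [CompleteSpace H]
    (h : Algorithm1 B F G I r s ρ φ q μ p b ν η) (hs : 0 < s) (hρ : 0 < ρ)
    (hρ' : ρ < (2 * r * s ^ 2 + s) / (1 + r * s) ^ 2)
    (hGs : IsSubgradient G φs (-B.adjoint μs)) (hFs : IsSubgradient F qs μs)
    (hIs : IsSubgradient I μs (B φs - qs)) :
    Bornology.IsBounded (Set.range fun n => B (φ (n + 1))) ∧
    Bornology.IsBounded (Set.range fun n => q (n + 1)) := by
  set E := algorithm1Energy s ρ (B φs) qs μs p b ν η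
  set δ := algorithm1Rate r s ρ
  have hδ : 0 < δ := algorithm1Rate_pos hs hρ hρ'
  have hstep := h.energy_step hs hρ hIs
  have hE n : 0 ≤ E n := by unfold E algorithm1Energy; positivity
  have hgG n := (h.isSubgradient_G n).inner_sub_nonneg hGs
  have hgF n := (h.isSubgradient_F n).inner_sub_nonneg hFs
  have hE0 n : E n ≤ E 0 :=
    antitone_nat_of_succ_le (fun n => by nlinarith [hstep n, hgG n, hgF n]) n.zero_le
  have hres n : ‖B (φ (n + 1)) - p (n + 1)‖ ≤ √(E 0 / δ) ∧
      ‖b (n + 1) - q (n + 1)‖ ≤ √(E 0 / δ) := by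
    have := hstep n
    constructor <;> refine norm_le_sqrt_of_mul_sq_le hδ ?_ <;>
      nlinarith [hE (n + 1), hE0 n, hgG n, hgF n, sq_nonneg ‖B (φ (n + 1)) - p (n + 1)‖,
        sq_nonneg ‖b (n + 1) - q (n + 1)‖]
  have hrelax n : ‖p (n + 1) - B φs‖ ≤ √(E 0 / (1 / (2 * ρ))) ∧
      ‖b (n + 1) - qs‖ ≤ √(E 0 / (1 / (2 * ρ))) := by
    have hPQ : 1 / (2 * ρ) * (‖p (n + 1) - B φs‖ ^ 2 + ‖b (n + 1) - qs‖ ^ 2) ≤ E n :=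
      le_add_of_nonneg_left (by positivity)
    have hc : 0 < 1 / (2 * ρ) := by positivity
    constructor <;> refine norm_le_sqrt_of_mul_sq_le hc ?_ <;>
      nlinarith [hE0 n, mul_nonneg hc.le (sq_nonneg ‖p (n + 1) - B φs‖),
        mul_nonneg hc.le (sq_nonneg ‖b (n + 1) - qs‖)]
  refine ⟨isBounded_range_of_norm_sub_le (y := B φs) (R := √(E 0 / δ) + √(E 0 / (1 / (2 * ρ))))
    fun n => ?_, isBounded_range_of_norm_sub_le (y := qs)
    (R := √(E 0 / (1 / (2 * ρ))) + √(E 0 / δ)) fun n => ?_⟩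
  · calc ‖B (φ (n + 1)) - B φs‖ = ‖(B (φ (n + 1)) - p (n + 1)) + (p (n + 1) - B φs)‖ := by
          rw [sub_add_sub_cancel]
      _ ≤ _ := (norm_add_le _ _).trans (add_le_add (hres n).1 (hrelax n).1)
  · calc ‖q (n + 1) - qs‖ = ‖(b (n + 1) - qs) - (b (n + 1) - q (n + 1))‖ := by
          rw [sub_sub_sub_cancel_left]
      _ ≤ _ := (norm_sub_le _ _).trans (add_le_add (hrelax n).2 (hres n).2)

end Algorithm1

end Iterates

theorem algorithm1_strong_convergence_general
    {V H : Type*} [NormedAddCommGroup V] [InnerProductSpace ℝ V] [CompleteSpace V]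
    [NormedAddCommGroup H] [InnerProductSpace ℝ H] [CompleteSpace H]
    (B : V →L[ℝ] H) (F : H → ℝ) (G : V → ℝ) (I : H → ℝ)
    (L : V → H → H → ℝ)
    (hL : ∀ (φ' : V) (q' μ' : H), L φ' q' μ' = F q' + G φ' - I μ' + ⟪μ', B φ' - q'⟫)
    (r s ρ : ℝ) (hs : 0 < s)
    (hρ1 : 0 < ρ) (hρ2 : ρ < (2*r*s^2 + s) / (1 + r*s)^2)
    (φs : V) (qs μs : H)
    (hsaddle : ∀ (φ' : V) (q' μ' : H), L φs qs μ' ≤ L φs qs μs ∧ L φs qs μs ≤ L φ' q' μs)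
    (φ : ℕ → V) (q μ p b ν η : ℕ → H)
    (hi : ∀ n, 1 ≤ n → ∀ μ' : H,
      I μ' - I (μ n) + ⟪μ n - μ', p n - b n⟫ - s * ⟪μ n - μ', μ n - ν (n-1)⟫
        - s * ⟪μ n - μ', μ n - η (n-1)⟫ ≥ 0)
    (hii : ∀ n, 1 ≤ n →
      ν n = s⁻¹ • (B (φ n) - p n) + μ n ∧ η n = s⁻¹ • (b n - q n) + μ n)
    (hiii : ∀ n, 1 ≤ n → ∀ φ' : V,
      G φ' - G (φ n) + ⟪ν n + r • (B (φ n) - p n), B φ' - B (φ n)⟫ ≥ 0)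
    (hiv : ∀ n, 1 ≤ n → ∀ q' : H,
      F q' - F (q n) + ⟪η n + r • (b n - q n), q n - q'⟫ ≥ 0)
    (hv : ∀ n, 1 ≤ n →
      p (n+1) = p n + (ρ * (r + 1/s)) • (B (φ n) - p n) ∧
      b (n+1) = b n - (ρ * (r + 1/s)) • (b n - q n))
    (hBinj : Function.Injective B) (hBrange : IsClosed (Set.range B)) :
    UniformlyConvexOnBoundedSets G →
      (Tendsto φ atTop (nhds φs) ∧
       Tendsto (fun n => B (φ n)) atTop (nhds (B φs)) ∧
       Tendsto p atTop (nhds (B φs)) ∧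
       (UniformlyConvexOnBoundedSets F →
         Tendsto q atTop (nhds qs) ∧ Tendsto b atTop (nhds qs))) := by
  intro hGuc
  have h : Algorithm1 B F G I r s ρ φ q μ p b ν η := ⟨hi, hii, hiii, hiv, hv⟩
  obtain ⟨hGs, hFs, hIs⟩ := isSubgradient_of_isSaddlePoint hL hsaddle
  obtain ⟨hBφp, hbq, hgapG, hgapF⟩ := h.tendsto_residuals_and_gaps hs hρ1 hρ2 hGs hFs hIs
  obtain ⟨hBφ_bdd, hq_bdd⟩ := h.isBounded_iterates hs hρ1 hρ2 hGs hFs hIs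
  obtain ⟨K, hK⟩ := B.antilipschitz_of_injective_of_isClosed_range hBinj hBrange
  have hφ_bdd := (hK.isBounded_preimage hBφ_bdd).subset (Set.range_subset_iff.2 fun n => ⟨n, rfl⟩)
  have hφ : Tendsto φ atTop (𝓝 φs) := (tendsto_add_atTop_iff_nat 1).1 <|
    hGuc.tendsto_of_inner_sub_tendsto_zero hφ_bdd h.isSubgradient_G hGs hgapG
  have hBφ := (B.continuous.tendsto φs).comp hφ
  refine ⟨hφ, hBφ, by simpa using hBφ.sub hBφp, fun hFuc => ?_⟩
  have hq : Tendsto q atTop (𝓝 qs) := (tendsto_add_atTop_iff_nat 1).1 <|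
    hFuc.tendsto_of_inner_sub_tendsto_zero hq_bdd h.isSubgradient_F hFs hgapF
  exact ⟨hq, by simpa using hq.add hbq⟩

/-- For Algorithm-1 iterates with B injective with closed range:
if G is uniformly convex on bounded subsets of V, then φⁿ → φ*, Bφⁿ → Bφ* and
pⁿ → Bφ* strongly; if moreover F is uniformly convex on bounded subsets of H,
then qⁿ → q* and bⁿ → q* strongly. -/
theorem algorithm1_strong_convergence
    {V H : Type*} [NormedAddCommGroup V] [InnerProductSpace ℝ V] [CompleteSpace V]
    [NormedAddCommGroup H] [InnerProductSpace ℝ H] [CompleteSpace H]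
    (B : V →L[ℝ] H) (F : H → ℝ) (G : V → ℝ) (I : H → ℝ)
    (hFconv : ConvexOn ℝ Set.univ F) (hFlsc : LowerSemicontinuous F)
    (hGconv : ConvexOn ℝ Set.univ G) (hGlsc : LowerSemicontinuous G)
    (hIconv : ConvexOn ℝ Set.univ I) (hIlsc : LowerSemicontinuous I)
    (L : V → H → H → ℝ)
    (hL : ∀ (φ' : V) (q' μ' : H), L φ' q' μ' = F q' + G φ' - I μ' + ⟪μ', B φ' - q'⟫)
    (r s ρ : ℝ) (hr : 0 < r) (hs : 0 < s)
    (hρ1 : 0 < ρ) (hρ2 : ρ < (2*r*s^2 + s) / (1 + r*s)^2)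
    (φs : V) (qs μs : H) (ps bs : H) (hps : ps = B φs) (hbs : bs = qs)
    (hsaddle : ∀ (φ' : V) (q' μ' : H), L φs qs μ' ≤ L φs qs μs ∧ L φs qs μs ≤ L φ' q' μs)
    (φ : ℕ → V) (q μ p b ν η : ℕ → H)
    (hi : ∀ n, 1 ≤ n → ∀ μ' : H,
      I μ' - I (μ n) + ⟪μ n - μ', p n - b n⟫ - s * ⟪μ n - μ', μ n - ν (n-1)⟫
        - s * ⟪μ n - μ', μ n - η (n-1)⟫ ≥ 0)
    (hii : ∀ n, 1 ≤ n →
      ν n = s⁻¹ • (B (φ n) - p n) + μ n ∧ η n = s⁻¹ • (b n - q n) + μ n)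
    (hiii : ∀ n, 1 ≤ n → ∀ φ' : V,
      G φ' - G (φ n) + ⟪ν n + r • (B (φ n) - p n), B φ' - B (φ n)⟫ ≥ 0)
    (hiv : ∀ n, 1 ≤ n → ∀ q' : H,
      F q' - F (q n) + ⟪η n + r • (b n - q n), q n - q'⟫ ≥ 0)
    (hv : ∀ n, 1 ≤ n →
      p (n+1) = p n + (ρ * (r + 1/s)) • (B (φ n) - p n) ∧
      b (n+1) = b n - (ρ * (r + 1/s)) • (b n - q n))
    (hBinj : Function.Injective B) (hBrange : IsClosed (Set.range B)) :
    UniformlyConvexOnBoundedSets G →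
      (Tendsto φ atTop (nhds φs) ∧
       Tendsto (fun n => B (φ n)) atTop (nhds (B φs)) ∧
       Tendsto p atTop (nhds (B φs)) ∧
       (UniformlyConvexOnBoundedSets F →
         Tendsto q atTop (nhds qs) ∧ Tendsto b atTop (nhds qs))) :=
  algorithm1_strong_convergence_general B F G I L hL r s ρ hs hρ1 hρ2 φs qs μs hsaddle φ q μ p b ν η
    hi hii hiii hiv hv hBinj hBrange
end

section
/- Let (φ̂, ν̂) be a saddle point of L_{p,μ}. Let ν₀ ∈ H and, for k ≥ 1, let φ_k ∈ V satisfy G(φ) − G(φ_k) + ⟨ν_{k−1} + r(Bφ_k − p), Bφ − Bφ_k⟩ ≥ 0 for all φ ∈ V, and set ν_k = ν_{k−1} + ρ_ν(Bφ_k − p − s(ν_{k−1} − μ)). If 0 < ρ_ν < 2r/(2rs + 1), then ν_k → ν̂ and Bφ_k → Bφ̂ strongly in H as k → ∞; if moreover B is injective with closed range, then φ_k → φ̂ strongly in V. -/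
/-!
Testing the saddle inequalities gives `B φ̂ - p = s (ν̂ - μ)` and shows that `φ̂` satisfies the
variational inequality of the iteration with `ν̂` in place of `νₖ₋₁`. Adding the two variational
inequalities yields the monotonicity estimate `⟪νₖ₋₁ - ν̂, B φₖ - B φ̂⟫ ≤ -r ‖B φₖ - B φ̂‖²`.
Since `νₖ - ν̂ = (1 - ρs)(νₖ₋₁ - ν̂) + ρ(B φₖ - B φ̂)`, expanding the square gives
`‖νₖ - ν̂‖² + ρ(2r(1 - ρs) - ρ) ‖B φₖ - B φ̂‖² ≤ (1 - ρs)² ‖νₖ₋₁ - ν̂‖²`, and the bound on `ρ` is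
exactly what makes the middle coefficient positive. An injective operator with closed range
between Hilbert spaces is antilipschitz, which transfers the convergence of `B φₖ` to `φₖ`.
-/

open RealInnerProductSpace Filter Topology Set

lemma nonneg_of_forall_mem_Ioc_nonneg_add_mul {a c : ℝ}
    (h : ∀ t ∈ Ioc (0 : ℝ) 1, 0 ≤ a + t * c) : 0 ≤ a := by
  have hlim : Tendsto (fun t : ℝ => a + t * c) (𝓝[>] 0) (𝓝 a) :=
    ((show Continuous fun t : ℝ => a + t * c by fun_prop).tendsto' 0 a (by simp)).mono_left
      nhdsWithin_le_nhds
  exact ge_of_tendsto hlim (Filter.mem_of_superset (Ioc_mem_nhdsGT zero_lt_one) h)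

/-- `D` bounds the directional derivative of `F` at `x` in direction `y - x`. -/
lemma ConvexOn.sub_add_nonneg_of_isMinOn_add {E : Type*} [AddCommGroup E] [Module ℝ E]
    {G F : E → ℝ} (hG : ConvexOn ℝ univ G) {x : E} (hmin : IsMinOn (G + F) univ x)
    {y : E} {D C : ℝ}
    (hF : ∀ t ∈ Ioc (0 : ℝ) 1, F (x + t • (y - x)) - F x ≤ t * D + t ^ 2 * C) :
    0 ≤ G y - G x + D := by
  refine nonneg_of_forall_mem_Ioc_nonneg_add_mul (c := C) fun t ht => ?_
  have hconv : G (x + t • (y - x)) ≤ (1 - t) * G x + t * G y := by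
    have := hG.2 (mem_univ x) (mem_univ y) (sub_nonneg.2 ht.2) ht.1.le (by ring)
    rwa [smul_eq_mul, smul_eq_mul, show (1 - t) • x + t • y = x + t • (y - x) by module] at this
  have hle := isMinOn_iff.1 hmin _ (mem_univ (x + t • (y - x)))
  simp only [Pi.add_apply] at hle
  have := hF t ht
  exact nonneg_of_mul_nonneg_right (by nlinarith) ht.1

section InnerProductSpace

variable {H : Type*} [NormedAddCommGroup H] [InnerProductSpace ℝ H]

lemma inner_add_half_mul_norm_sq_add_smul (ν b w : H) (r t : ℝ) :
    ⟪ν, b + t • w⟫ + r / 2 * ‖b + t • w‖ ^ 2 - (⟪ν, b⟫ + r / 2 * ‖b‖ ^ 2)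
      = t * ⟪ν + r • b, w⟫ + t ^ 2 * (r / 2 * ‖w‖ ^ 2) := by
  rw [inner_add_right, real_inner_smul_right, norm_add_sq_real, real_inner_smul_right,
    norm_smul, inner_add_left, real_inner_smul_left, Real.norm_eq_abs, mul_pow, sq_abs]
  ring

lemma eq_smul_sub_of_isMaxOn_inner_sub_mul_norm_sq {s : ℝ} (hs : 0 < s) {d μ ν : H}
    (hmax : IsMaxOn (fun ν' => ⟪ν', d⟫ - s / 2 * ‖ν' - μ‖ ^ 2) univ ν) :
    d = s • (ν - μ) := by
  obtain ⟨e, rfl⟩ : ∃ e, d = s • e := ⟨s⁻¹ • d, (smul_inv_smul₀ hs.ne' d).symm⟩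
  obtain ⟨c, rfl⟩ : ∃ c, ν = μ + c := ⟨ν - μ, by abel⟩
  have hle := isMaxOn_iff.1 hmax (μ + e) (mem_univ _)
  -- the maximum of the concave quadratic is attained at `μ + e`, with excess `s/2 ‖e - c‖²`
  have hgap : ⟪μ + e, s • e⟫ - s / 2 * ‖μ + e - μ‖ ^ 2 - (⟪μ + c, s • e⟫ - s / 2 * ‖μ + c - μ‖ ^ 2)
      = s / 2 * ‖e - c‖ ^ 2 := by
    simp only [add_sub_cancel_left, inner_add_left, real_inner_smul_right, norm_sub_sq_real,
      real_inner_self_eq_norm_sq, real_inner_comm c e]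
    ring
  have hzero : ‖e - c‖ ^ 2 ≤ 0 := by nlinarith
  have hec : e = c := sub_eq_zero.1 (by simpa using hzero)
  rw [hec, add_sub_cancel_left]

lemma inner_sub_le_neg_mul_norm_sq_of_variational_inequalities {r g g' : ℝ} {p u u' l l' : H}
    (h : 0 ≤ g' - g + ⟪l + r • (u - p), u' - u⟫) (h' : 0 ≤ g - g' + ⟪l' + r • (u' - p), u - u'⟫) :
    ⟪l - l', u - u'⟫ ≤ -(r * ‖u - u'‖ ^ 2) := by
  have hsum : ⟪l + r • (u - p), u' - u⟫ + ⟪l' + r • (u' - p), u - u'⟫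
      = -(⟪l - l', u - u'⟫ + r * ‖u - u'‖ ^ 2) := by
    rw [show u' - u = -(u - u') by abel, inner_neg_right, neg_add_eq_sub, ← inner_sub_left,
      show l' + r • (u' - p) - (l + r • (u - p)) = -((l - l') + r • (u - u')) by module,
      inner_neg_left, inner_add_left, real_inner_smul_left, real_inner_self_eq_norm_sq]
  linarith

lemma norm_smul_add_smul_sq_add_le {q ρ r : ℝ} (hq : 0 ≤ q) (hρ : 0 ≤ ρ) {e w : H}
    (h : ⟪e, w⟫ ≤ -(r * ‖w‖ ^ 2)) :
    ‖q • e + ρ • w‖ ^ 2 + ρ * (2 * r * q - ρ) * ‖w‖ ^ 2 ≤ q ^ 2 * ‖e‖ ^ 2 := by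
  rw [norm_add_sq_real, real_inner_smul_left, real_inner_smul_right, norm_smul, norm_smul,
    Real.norm_eq_abs, Real.norm_eq_abs, abs_of_nonneg hq, abs_of_nonneg hρ]
  nlinarith [mul_le_mul_of_nonneg_left h (mul_nonneg hq hρ)]

lemma norm_uzawa_update_sub_sq_add_le {r s ρ : ℝ} (hρs : ρ * s ≤ 1) (hρ : 0 ≤ ρ)
    {p μ u u' l ν : H} (hopt : u' - p = s • (ν - μ))
    (hmono : ⟪l - ν, u - u'⟫ ≤ -(r * ‖u - u'‖ ^ 2)) :
    ‖l + ρ • (u - p - s • (l - μ)) - ν‖ ^ 2 + ρ * (2 * r * (1 - ρ * s) - ρ) * ‖u - u'‖ ^ 2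
      ≤ (1 - ρ * s) ^ 2 * ‖l - ν‖ ^ 2 := by
  have hsplit : l + ρ • (u - p - s • (l - μ)) - ν = (1 - ρ * s) • (l - ν) + ρ • (u - u') := by
    rw [show p = u' - s • (ν - μ) by rw [← hopt]; abel]
    module
  rw [hsplit]
  exact norm_smul_add_smul_sq_add_le (by linarith) hρ hmono

lemma variational_inequality_of_isMinOn {V : Type*} [AddCommGroup V] [Module ℝ V]
    (B : V →ₗ[ℝ] H) {G : V → ℝ} (hG : ConvexOn ℝ univ G) {r : ℝ} {p ν : H} {φ₀ : V}
    (hmin : IsMinOn (fun φ => G φ + (⟪ν, B φ - p⟫ + r / 2 * ‖B φ - p‖ ^ 2)) univ φ₀) (φ : V) :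
    0 ≤ G φ - G φ₀ + ⟪ν + r • (B φ₀ - p), B φ - B φ₀⟫ := by
  refine hG.sub_add_nonneg_of_isMinOn_add hmin (C := r / 2 * ‖B φ - B φ₀‖ ^ 2) fun t _ => ?_
  have hB : B (φ₀ + t • (φ - φ₀)) - p = (B φ₀ - p) + t • (B φ - B φ₀) := by
    rw [map_add, map_smul, map_sub]
    abel
  rw [hB, inner_add_half_mul_norm_sq_add_smul]

end InnerProductSpace

lemma tendsto_zero_of_add_mul_le_mul {a b : ℕ → ℝ} {q c : ℝ} (ha : ∀ k, 0 ≤ a k)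
    (hb : ∀ k, 0 ≤ b k) (hq₀ : 0 ≤ q) (hq₁ : q < 1) (hc : 0 < c)
    (h : ∀ k, a (k + 1) + c * b (k + 1) ≤ q * a k) :
    Tendsto a atTop (𝓝 0) ∧ Tendsto b atTop (𝓝 0) := by
  have hgeom : ∀ k, a k ≤ q ^ k * a 0 := by
    intro k
    induction k with
    | zero => simp
    | succ k ih =>
      calc a (k + 1) ≤ q * a k := by nlinarith [h k, hb (k + 1)]
        _ ≤ q * (q ^ k * a 0) := mul_le_mul_of_nonneg_left ih hq₀
        _ = q ^ (k + 1) * a 0 := by ring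
  have hgeom_lim : Tendsto (fun k => q ^ k * a 0) atTop (𝓝 0) := by
    simpa using (tendsto_pow_atTop_nhds_zero_of_lt_one hq₀ hq₁).mul_const (a 0)
  have ha_lim : Tendsto a atTop (𝓝 0) := squeeze_zero ha hgeom hgeom_lim
  refine ⟨ha_lim, (tendsto_add_atTop_iff_nat 1).1 ?_⟩
  refine squeeze_zero (fun k => hb (k + 1)) (g := fun k => q * a k / c) (fun k => ?_) ?_
  · rw [le_div_iff₀ hc]
    nlinarith [h k, ha (k + 1)]
  · simpa using (ha_lim.const_mul q).div_const c

lemma tendsto_of_tendsto_norm_sub_sq_zero {ι E : Type*} [SeminormedAddCommGroup E]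
    {l : Filter ι} {f : ι → E} {x : E} (h : Tendsto (fun i => ‖f i - x‖ ^ 2) l (𝓝 0)) :
    Tendsto f l (𝓝 x) := by
  rw [tendsto_iff_norm_sub_tendsto_zero]
  simpa [Real.sqrt_sq (norm_nonneg _)] using h.sqrt

theorem inner_uzawa_convergence_general
    {V H : Type*} [NormedAddCommGroup V] [InnerProductSpace ℝ V] [CompleteSpace V]
    [NormedAddCommGroup H] [InnerProductSpace ℝ H] [CompleteSpace H]
    (B : V →L[ℝ] H) (G : V → ℝ)
    (hGconv : ConvexOn ℝ Set.univ G)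
    (r s : ℝ) (hr : 0 < r) (hs : 0 < s) (p μ : H)
    (Lpμ : V → H → ℝ)
    (hLpμ : ∀ (φ : V) (ν : H), Lpμ φ ν =
      G φ + ⟪ν, B φ - p⟫ + (r/2) * ‖B φ - p‖^2 - (s/2) * ‖ν - μ‖^2)
    (φhat : V) (νhat : H)
    (hsaddle : ∀ (φ : V) (ν : H), Lpμ φhat ν ≤ Lpμ φhat νhat ∧ Lpμ φhat νhat ≤ Lpμ φ νhat)
    (ρν : ℝ) (hρν1 : 0 < ρν) (hρν2 : ρν < 2*r / (2*r*s + 1))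
    (φseq : ℕ → V) (νseq : ℕ → H)
    (hφk : ∀ k, 1 ≤ k → ∀ φ : V,
      G φ - G (φseq k) + ⟪νseq (k-1) + r • (B (φseq k) - p), B φ - B (φseq k)⟫ ≥ 0)
    (hνk : ∀ k, 1 ≤ k →
      νseq k = νseq (k-1) + ρν • (B (φseq k) - p - s • (νseq (k-1) - μ))) :
    Tendsto νseq atTop (nhds νhat) ∧
    Tendsto (fun k => B (φseq k)) atTop (nhds (B φhat)) ∧
    (Function.Injective B → IsClosed (Set.range B) →
      Tendsto φseq atTop (nhds φhat)) := by
  have hρν : ρν * (2 * r * s + 1) < 2 * r := (lt_div_iff₀ (by positivity)).1 hρν2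
  have hρνs : ρν * s < 1 := by nlinarith
  have hb : B φhat - p = s • (νhat - μ) :=
    eq_smul_sub_of_isMaxOn_inner_sub_mul_norm_sq hs <| isMaxOn_iff.2 fun ν _ => by
      have := (hsaddle φhat ν).1
      rw [hLpμ, hLpμ] at this
      linarith
  have hVI := variational_inequality_of_isMinOn (B : V →ₗ[ℝ] H) hGconv (r := r) (p := p)
    (ν := νhat) (φ₀ := φhat) <| isMinOn_iff.2 fun φ _ => by
      have := (hsaddle φ νhat).2
      rw [hLpμ, hLpμ] at this
      simp only [ContinuousLinearMap.coe_coe]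
      linarith
  have hstep : ∀ k, ‖νseq (k + 1) - νhat‖ ^ 2
      + ρν * (2 * r * (1 - ρν * s) - ρν) * ‖B (φseq (k + 1)) - B φhat‖ ^ 2
      ≤ (1 - ρν * s) ^ 2 * ‖νseq k - νhat‖ ^ 2 := by
    intro k
    have hφ := hφk (k + 1) k.succ_pos φhat
    rw [Nat.add_sub_cancel] at hφ
    rw [hνk (k + 1) k.succ_pos, Nat.add_sub_cancel]
    exact norm_uzawa_update_sub_sq_add_le hρνs.le hρν1.le hb
      (inner_sub_le_neg_mul_norm_sq_of_variational_inequalities hφ (hVI _))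
  have hq : (1 - ρν * s) ^ 2 < 1 := pow_lt_one₀ (by linarith) (by nlinarith) two_ne_zero
  have hc : 0 < ρν * (2 * r * (1 - ρν * s) - ρν) := by nlinarith [mul_pos hρν1 (sub_pos.2 hρν)]
  obtain ⟨hν_lim, hBφ_lim⟩ := tendsto_zero_of_add_mul_le_mul
    (a := fun k => ‖νseq k - νhat‖ ^ 2) (b := fun k => ‖B (φseq k) - B φhat‖ ^ 2)
    (fun _ => by positivity) (fun _ => by positivity) (sq_nonneg _) hq hc hstep
  have hBφ := tendsto_of_tendsto_norm_sub_sq_zero hBφ_lim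
  refine ⟨tendsto_of_tendsto_norm_sub_sq_zero hν_lim, hBφ, fun hinj hclosed => ?_⟩
  obtain ⟨K, hK⟩ := B.antilipschitz_of_injective_of_isClosed_range hinj hclosed
  exact (hK.isUniformEmbedding B.uniformContinuous).isInducing.tendsto_nhds_iff.2 hBφ

/-- Lemma 1: convergence of the inner Uzawa iteration for the
saddle point of L_{p,μ}. -/
theorem inner_uzawa_convergence
    {V H : Type*} [NormedAddCommGroup V] [InnerProductSpace ℝ V] [CompleteSpace V]
    [NormedAddCommGroup H] [InnerProductSpace ℝ H] [CompleteSpace H]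
    (B : V →L[ℝ] H) (G : V → ℝ)
    (hGconv : ConvexOn ℝ Set.univ G) (hGlsc : LowerSemicontinuous G)
    (r s : ℝ) (hr : 0 < r) (hs : 0 < s) (p μ : H)
    (Lpμ : V → H → ℝ)
    (hLpμ : ∀ (φ : V) (ν : H), Lpμ φ ν =
      G φ + ⟪ν, B φ - p⟫ + (r/2) * ‖B φ - p‖^2 - (s/2) * ‖ν - μ‖^2)
    (φhat : V) (νhat : H)
    (hsaddle : ∀ (φ : V) (ν : H), Lpμ φhat ν ≤ Lpμ φhat νhat ∧ Lpμ φhat νhat ≤ Lpμ φ νhat)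
    (ρν : ℝ) (hρν1 : 0 < ρν) (hρν2 : ρν < 2*r / (2*r*s + 1))
    (φseq : ℕ → V) (νseq : ℕ → H)
    (hφk : ∀ k, 1 ≤ k → ∀ φ : V,
      G φ - G (φseq k) + ⟪νseq (k-1) + r • (B (φseq k) - p), B φ - B (φseq k)⟫ ≥ 0)
    (hνk : ∀ k, 1 ≤ k →
      νseq k = νseq (k-1) + ρν • (B (φseq k) - p - s • (νseq (k-1) - μ))) :
    Tendsto νseq atTop (nhds νhat) ∧
    Tendsto (fun k => B (φseq k)) atTop (nhds (B φhat)) ∧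
    (Function.Injective B → IsClosed (Set.range B) →
      Tendsto φseq atTop (nhds φhat)) :=
  inner_uzawa_convergence_general B G hGconv r s hr hs p μ Lpμ hLpμ φhat νhat hsaddle ρν hρν1 hρν2
    φseq νseq hφk hνk
end
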